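/- arXiv:2005.04303 — 9 statements merged into one kernel-verified Lean document; each statement's English description precedes it below -/
import Mathlib

section
/- Let g : ℝ² → ℝ be continuously differentiable with ∂g/∂y(x,y) ≤ −δ for all (x,y) ∈ ℝ², where δ > 0. Let Ω ⊂ ℝⁿ be a bounded measurable set, and let x, η : Ω → ℝ and m : ℝ → ℝ be measurable with η square-integrable and with u ↦ η(u)·(g(x(u), m(x(u))+η(u)) − g(x(u), m(x(u)))) integrable. Then ∫_Ω η(u)·(g(x(u), m(x(u))+η(u)) − g(x(u), m(x(u)))) du ≤ −δ ∫_Ω η(u)² du. -/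
open MeasureTheory Real

theorem mul_sub_le_neg_mul_sq_of_deriv_le {f : ℝ → ℝ} (hf : Differentiable ℝ f) {δ : ℝ}
    (hf' : ∀ s, deriv f s ≤ -δ) (b e : ℝ) : e * (f (b + e) - f b) ≤ -δ * e ^ 2 := by
  rcases le_total 0 e with he | he
  · have hslope := image_sub_le_mul_sub_of_deriv_le hf hf' (le_add_of_nonneg_right he : b ≤ b + e)
    nlinarith
  · have hslope := image_sub_le_mul_sub_of_deriv_le hf hf' (add_le_of_nonpos_right he : b + e ≤ b)
    nlinarith

theorem ContDiff.differentiable_uncurry_right {g : ℝ → ℝ → ℝ}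
    (hg : ContDiff ℝ 1 (fun p : ℝ × ℝ => g p.1 p.2)) (a : ℝ) : Differentiable ℝ (g a) :=
  (hg.differentiable one_ne_zero).comp (differentiable_const a |>.prodMk differentiable_id)

theorem stmt2_general (n : ℕ) (Ω : Set (Fin n → ℝ))
    (δ : ℝ)
    (g : ℝ → ℝ → ℝ) (hg : ContDiff ℝ 1 (fun p : ℝ × ℝ => g p.1 p.2))
    (hgy : ∀ a b : ℝ, deriv (fun s => g a s) b ≤ -δ)
    (m : ℝ → ℝ)
    (x η : (Fin n → ℝ) → ℝ)
    (hη2 : IntegrableOn (fun u => (η u) ^ 2) Ω)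
    (hint : IntegrableOn
      (fun u => η u * (g (x u) (m (x u) + η u) - g (x u) (m (x u)))) Ω) :
    (∫ u in Ω, η u * (g (x u) (m (x u) + η u) - g (x u) (m (x u)))) ≤
      -δ * ∫ u in Ω, (η u) ^ 2 := by
  rw [← integral_const_mul]
  exact setIntegral_mono hint (hη2.const_mul _) fun u =>
    mul_sub_le_neg_mul_sq_of_deriv_le (hg.differentiable_uncurry_right (x u)) (hgy (x u))
      (m (x u)) (η u)

/-- If g : ℝ² → ℝ is C¹ with ∂g/∂y ≤ -δ everywhere (δ > 0), Ω is a bounded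
measurable set, x, η, m measurable with η square-integrable and the integrand integrable,
then ∫_Ω η (g(x, m(x)+η) - g(x, m(x))) ≤ -δ ∫_Ω η². -/
theorem stmt2 (n : ℕ) (Ω : Set (Fin n → ℝ)) (hΩm : MeasurableSet Ω)
    (hΩb : Bornology.IsBounded Ω)
    (δ : ℝ) (hδ : 0 < δ)
    (g : ℝ → ℝ → ℝ) (hg : ContDiff ℝ 1 (fun p : ℝ × ℝ => g p.1 p.2))
    (hgy : ∀ a b : ℝ, deriv (fun s => g a s) b ≤ -δ)
    (m : ℝ → ℝ) (hmm : Measurable m)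
    (x η : (Fin n → ℝ) → ℝ) (hxm : Measurable x) (hηm : Measurable η)
    (hη2 : IntegrableOn (fun u => (η u) ^ 2) Ω)
    (hint : IntegrableOn
      (fun u => η u * (g (x u) (m (x u) + η u) - g (x u) (m (x u)))) Ω) :
    (∫ u in Ω, η u * (g (x u) (m (x u) + η u) - g (x u) (m (x u)))) ≤
      -δ * ∫ u in Ω, (η u) ^ 2 :=
  stmt2_general n Ω δ g hg hgy m x η hη2 hint
end

section
/- Let Ω ⊂ ℝⁿ be a bounded measurable set of finite positive Lebesgue measure, let α, β, γ, M, N, δ, ρ > 0, let f : ℝ² → ℝ be continuously differentiable with ∂f/∂x ≤ −α and 0 ≤ ∂f/∂y ≤ βN everywhere, and let m : ℝ → ℝ be continuously differentiable with 0 ≤ m′ ≤ γM/δ. Then for all bounded measurable square-integrable functions x, X, η : Ω → ℝ: ∫_Ω (x−X)(u)·( f(x(u), m(x(u))+η(u)) − f(X(u), m(X(u))) ) du ≤ ( βN(γM/δ + ρ²) − α ) ∫_Ω (x−X)(u)² du + (βN/ρ²) ∫_Ω η(u)² du. -/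
/-!
Pointwise, split `f a (m a + e) - f b (m b)` through `f b (m a + e)`. By the mean value theorem
the first difference contributes at most `-α (a - b)²`, while the second is bounded by
`βN (γM/δ |a - b| + |e|)`; Young's inequality `|a - b| |e| ≤ ρ² (a - b)² + e² / ρ²` splits the
cross term. The integrand is a continuous function of the bounded functions `x, X, η`, hence
bounded and integrable on the finite-measure set `Ω`, so the pointwise inequality integrates.
-/

open MeasureTheory Set

theorem mul_sub_le_neg_mul_sq_of_deriv_le_s4 {g : ℝ → ℝ} (hg : Differentiable ℝ g) {α : ℝ}
    (hg' : ∀ t, deriv g t ≤ -α) (a b : ℝ) : (a - b) * (g a - g b) ≤ -α * (a - b) ^ 2 := by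
  rcases le_total a b with hab | hab <;>
    nlinarith [image_sub_le_mul_sub_of_deriv_le hg hg' hab, sub_nonneg.2 hab]

theorem abs_sub_le_mul_abs_sub_of_abs_deriv_le {g : ℝ → ℝ} (hg : Differentiable ℝ g) {C : ℝ}
    (hg' : ∀ t, |deriv g t| ≤ C) (p q : ℝ) : |g p - g q| ≤ C * |p - q| :=
  convex_univ.norm_image_sub_le_of_norm_deriv_le (fun t _ => hg t) (fun t _ => hg' t)
    (mem_univ q) (mem_univ p)

theorem mul_sub_le_of_decreasing_of_lipschitz {f : ℝ → ℝ → ℝ} {m : ℝ → ℝ} {α L K ρ : ℝ}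
    (hρ : ρ ≠ 0) (hfx : ∀ y a b, (a - b) * (f a y - f b y) ≤ -α * (a - b) ^ 2)
    (hfy : ∀ x p q, |f x p - f x q| ≤ L * |p - q|) (hm : ∀ p q, |m p - m q| ≤ K * |p - q|)
    (a b e : ℝ) :
    (a - b) * (f a (m a + e) - f b (m b)) ≤
      (L * (K + ρ ^ 2) - α) * (a - b) ^ 2 + L / ρ ^ 2 * e ^ 2 := by
  have hL : 0 ≤ L := by simpa using (abs_nonneg _).trans (hfy 0 1 0)
  have hshift : |m a + e - m b| ≤ K * |a - b| + |e| := by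
    rw [add_sub_right_comm]
    exact (abs_add_le _ _).trans (add_le_add_left (hm a b) _)
  have hcross : (a - b) * (f b (m a + e) - f b (m b)) ≤ L * (K * (a - b) ^ 2 + |a - b| * |e|) :=
    calc (a - b) * (f b (m a + e) - f b (m b))
        ≤ |a - b| * |f b (m a + e) - f b (m b)| := by rw [← abs_mul]; exact le_abs_self _
      _ ≤ |a - b| * (L * (K * |a - b| + |e|)) := by
          gcongr; exact (hfy b _ _).trans (by gcongr)
      _ = L * (K * (a - b) ^ 2 + |a - b| * |e|) := by rw [← sq_abs (a - b)]; ring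
  have hyoung := two_mul_le_add_mul_sq (a := |a - b|) (b := |e|) (pow_pos (abs_pos.2 hρ) 2)
  rw [sq_abs, sq_abs, sq_abs] at hyoung
  have hprod : 0 ≤ |a - b| * |e| := by positivity
  calc (a - b) * (f a (m a + e) - f b (m b))
      = (a - b) * (f a (m a + e) - f b (m a + e)) + (a - b) * (f b (m a + e) - f b (m b)) := by
        ring
    _ ≤ -α * (a - b) ^ 2 + L * (K * (a - b) ^ 2 + (ρ ^ 2 * (a - b) ^ 2 + (ρ ^ 2)⁻¹ * e ^ 2)) := by
        gcongr ?_ + ?_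
        · exact hfx _ a b
        · exact hcross.trans (by gcongr; linarith)
    _ = (L * (K + ρ ^ 2) - α) * (a - b) ^ 2 + L / ρ ^ 2 * e ^ 2 := by ring

theorem integrableOn_comp_of_mapsTo_isCompact {α E : Type*} [MeasurableSpace α] {μ : Measure α}
    {s : Set α} [TopologicalSpace E] [MeasurableSpace E] [OpensMeasurableSpace E] {G : E → ℝ}
    (hG : Continuous G) {K : Set E} (hK : IsCompact K) {p : α → E} (hp : Measurable p)
    (hpK : ∀ a, p a ∈ K) (hs : μ s ≠ ⊤) : IntegrableOn (G ∘ p) s μ := by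
  obtain ⟨C, hC⟩ := hK.exists_bound_of_continuousOn hG.continuousOn
  exact Measure.integrableOn_of_bounded hs (hG.measurable.comp hp).aestronglyMeasurable
    (ae_of_all _ fun a => hC _ (hpK a))

theorem stmt4_general (n : ℕ) (Ω : Set (Fin n → ℝ)) (hΩfin : volume Ω < ⊤)
    (α β γ M N δ ρ : ℝ) (hρ : 0 < ρ)
    (f : ℝ → ℝ → ℝ) (hf : ContDiff ℝ 1 (fun p : ℝ × ℝ => f p.1 p.2))
    (hfx : ∀ a b : ℝ, deriv (fun s => f s b) a ≤ -α)
    (hfy : ∀ a b : ℝ, 0 ≤ deriv (fun s => f a s) b ∧ deriv (fun s => f a s) b ≤ β * N)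
    (m : ℝ → ℝ) (hmC : ContDiff ℝ 1 m)
    (hm' : ∀ a : ℝ, 0 ≤ deriv m a ∧ deriv m a ≤ γ * M / δ)
    (x X η : (Fin n → ℝ) → ℝ)
    (hxm : Measurable x) (hXm : Measurable X) (hηm : Measurable η)
    (Cx : ℝ) (hxb : ∀ u, |x u| ≤ Cx) (CX : ℝ) (hXb : ∀ u, |X u| ≤ CX)
    (Cη : ℝ) (hηb : ∀ u, |η u| ≤ Cη) :
    (∫ u in Ω, (x u - X u) * (f (x u) (m (x u) + η u) - f (X u) (m (X u)))) ≤
      (β * N * (γ * M / δ + ρ ^ 2) - α) * (∫ u in Ω, (x u - X u) ^ 2) +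
        β * N / ρ ^ 2 * ∫ u in Ω, (η u) ^ 2 := by
  have hfd := hf.differentiable one_ne_zero
  have hfd₁ (b : ℝ) : Differentiable ℝ (fun s => f s b) :=
    hfd.comp (differentiable_id.prodMk (differentiable_const b))
  have hfd₂ (a : ℝ) : Differentiable ℝ (fun s => f a s) :=
    hfd.comp ((differentiable_const a).prodMk differentiable_id)
  have hpointwise := mul_sub_le_of_decreasing_of_lipschitz (f := f) (m := m) hρ.ne'
    (fun b => mul_sub_le_neg_mul_sq_of_deriv_le_s4 (hfd₁ b) (hfx · b))
    (fun a => abs_sub_le_mul_abs_sub_of_abs_deriv_le (hfd₂ a)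
      fun b => abs_le.2 ⟨by linarith [hfy a b], (hfy a b).2⟩)
    (abs_sub_le_mul_abs_sub_of_abs_deriv_le (hmC.differentiable one_ne_zero)
      fun a => abs_le.2 ⟨by linarith [hm' a], (hm' a).2⟩)
  have hint : ∀ G : ℝ × ℝ × ℝ → ℝ, Continuous G →
      IntegrableOn (fun u => G (x u, X u, η u)) Ω :=
    fun G hG => integrableOn_comp_of_mapsTo_isCompact hG
      ((isCompact_closedBall 0 Cx).prod ((isCompact_closedBall 0 CX).prod
        (isCompact_closedBall 0 Cη)))
      (hxm.prodMk (hXm.prodMk hηm))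
      (fun u => by simp [hxb u, hXb u, hηb u]) hΩfin.ne
  have hsq := hint (fun p => (p.1 - p.2.1) ^ 2) (by fun_prop)
  have hη2 := hint (fun p => p.2.2 ^ 2) (by fun_prop)
  rw [← integral_const_mul, ← integral_const_mul,
    ← integral_add (hsq.const_mul _) (hη2.const_mul _)]
  refine setIntegral_mono
    (hint (fun p => (p.1 - p.2.1) * (f p.1 (m p.1 + p.2.2) - f p.2.1 (m p.2.1))) ?_)
    ((hsq.const_mul _).add (hη2.const_mul _)) fun u => hpointwise (x u) (X u) (η u)
  have hfc := hf.continuous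
  have hmc := hmC.continuous
  fun_prop

/-- For Ω of finite positive measure, α, β, γ, M, N, δ, ρ > 0, f C¹ with
∂f/∂x ≤ -α and 0 ≤ ∂f/∂y ≤ βN everywhere, m C¹ with 0 ≤ m' ≤ γM/δ, and bounded
measurable square-integrable x, X, η :
∫_Ω (x-X)(f(x, m(x)+η) - f(X, m(X))) ≤ (βN(γM/δ + ρ²) - α) ∫_Ω (x-X)² + (βN/ρ²) ∫_Ω η². -/
theorem stmt4 (n : ℕ) (Ω : Set (Fin n → ℝ)) (hΩm : MeasurableSet Ω)
    (hΩb : Bornology.IsBounded Ω) (hΩpos : 0 < volume Ω) (hΩfin : volume Ω < ⊤)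
    (α β γ M N δ ρ : ℝ) (hα : 0 < α) (hβ : 0 < β) (hγ : 0 < γ)
    (hM : 0 < M) (hN : 0 < N) (hδ : 0 < δ) (hρ : 0 < ρ)
    (f : ℝ → ℝ → ℝ) (hf : ContDiff ℝ 1 (fun p : ℝ × ℝ => f p.1 p.2))
    (hfx : ∀ a b : ℝ, deriv (fun s => f s b) a ≤ -α)
    (hfy : ∀ a b : ℝ, 0 ≤ deriv (fun s => f a s) b ∧ deriv (fun s => f a s) b ≤ β * N)
    (m : ℝ → ℝ) (hmC : ContDiff ℝ 1 m)
    (hm' : ∀ a : ℝ, 0 ≤ deriv m a ∧ deriv m a ≤ γ * M / δ)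
    (x X η : (Fin n → ℝ) → ℝ)
    (hxm : Measurable x) (hXm : Measurable X) (hηm : Measurable η)
    (Cx : ℝ) (hxb : ∀ u, |x u| ≤ Cx) (CX : ℝ) (hXb : ∀ u, |X u| ≤ CX)
    (Cη : ℝ) (hηb : ∀ u, |η u| ≤ Cη)
    (hx2 : IntegrableOn (fun u => (x u) ^ 2) Ω)
    (hX2 : IntegrableOn (fun u => (X u) ^ 2) Ω)
    (hη2 : IntegrableOn (fun u => (η u) ^ 2) Ω) :
    (∫ u in Ω, (x u - X u) * (f (x u) (m (x u) + η u) - f (X u) (m (X u)))) ≤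
      (β * N * (γ * M / δ + ρ ^ 2) - α) * (∫ u in Ω, (x u - X u) ^ 2) +
        β * N / ρ ^ 2 * ∫ u in Ω, (η u) ^ 2 :=
  stmt4_general n Ω hΩfin α β γ M N δ ρ hρ f hf hfx hfy m hmC hm' x X η hxm hXm hηm Cx hxb CX hXb Cη
    hηb
end

section
/- Let Ω ⊂ ℝⁿ be a bounded measurable set of finite positive Lebesgue measure, J continuous, bounded, nonnegative and symmetric, α, β, γ, M, N, δ, ρ > 0, f : ℝ² → ℝ continuously differentiable with ∂f/∂x ≤ −α and 0 ≤ ∂f/∂y ≤ βN everywhere, and m : ℝ → ℝ continuously differentiable with 0 ≤ m′ ≤ γM/δ. Let T > 0 and let x, X, η : [0,T] × Ω → ℝ be continuous, bounded, continuously differentiable in t with bounded time-derivative, satisfying pointwise on [0,T] × Ω the equations ∂x/∂t = f(x, m(x)+η) + K_J x and ∂X/∂t = f(X, m(X)) + K_J X. Then for every t ∈ [0,T], d/dt ∫_Ω (x(t,u)−X(t,u))² du ≤ 2C₁ ∫_Ω (x(t,u)−X(t,u))² du + 2C₂ ∫_Ω η(t,u)² du, where C₁ = βN(γM/δ + ρ²)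 − α and C₂ = βN/ρ². -/
open MeasureTheory Real Filter Topology Function

/-!
Differentiating under the integral sign (dominated convergence, the time-derivatives being
bounded) gives `d/dt ∫ (x - X)² = ∫ 2 (x - X) (∂ₜx - ∂ₜX)`. The reaction part of the integrand
is estimated pointwise: `f` decreases at rate `α` in its first argument and is `βN`-Lipschitz in
its second, `m` is `γM/δ`-Lipschitz, and the cross term with `η` is split by Young's inequality
with weight `ρ²`. The nonlocal part integrates to a nonpositive number: with `w = x - X`,
`2 w(u) (w(v) - w(u)) ≤ w(v)² - w(u)²`, and the double integral of `J(u - v) (w(v)² - w(u)²)`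
vanishes because `J` is symmetric.
-/

lemma mul_sub_le_of_deriv_le {g : ℝ → ℝ} (hg : Differentiable ℝ g) {c : ℝ}
    (hc : ∀ s, deriv g s ≤ c) (a b : ℝ) : (a - b) * (g a - g b) ≤ c * (a - b) ^ 2 := by
  have hanti : Antitone fun s => g s - c * s := by
    refine antitone_of_deriv_nonpos (by fun_prop) fun s => ?_
    rw [deriv_fun_sub (hg s) (by fun_prop), deriv_const_mul_field', deriv_id'']
    linarith [hc s]
  rcases le_total a b with hab | hab
  · nlinarith [hanti hab]
  · nlinarith [hanti hab]

lemma abs_sub_le_of_abs_deriv_le {g : ℝ → ℝ} (hg : Differentiable ℝ g) {C : ℝ}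
    (hC : ∀ s, |deriv g s| ≤ C) (a b : ℝ) : |g a - g b| ≤ C * |a - b| :=
  convex_univ.norm_image_sub_le_of_norm_deriv_le (fun s _ => hg s) (fun s _ => hC s) trivial trivial

lemma two_mul_sub_mul_sub_le {f : ℝ → ℝ → ℝ} {m : ℝ → ℝ} {α L K ρ : ℝ}
    (hf₁ : ∀ a b c, (a - b) * (f a c - f b c) ≤ -α * (a - b) ^ 2)
    (hf₂ : ∀ a c c', |f a c - f a c'| ≤ L * |c - c'|) (hL : 0 ≤ L)
    (hm : ∀ a b, |m a - m b| ≤ K * |a - b|) (hρ : ρ ≠ 0) (a b e : ℝ) :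
    2 * (a - b) * (f a (m a + e) - f b (m b)) ≤
      2 * (L * (K + ρ ^ 2) - α) * (a - b) ^ 2 + 2 * (L / ρ ^ 2) * e ^ 2 := by
  have hfirst := hf₁ a b (m a + e)
  have hsecond : (a - b) * (f b (m a + e) - f b (m b)) ≤ L * (K * (a - b) ^ 2 + |a - b| * |e|) :=
    calc (a - b) * (f b (m a + e) - f b (m b))
        ≤ |a - b| * |f b (m a + e) - f b (m b)| := (le_abs_self _).trans (abs_mul _ _).le
      _ ≤ |a - b| * (L * (K * |a - b| + |e|)) := by
          gcongr
          refine (hf₂ _ _ _).trans (mul_le_mul_of_nonneg_left ?_ hL)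
          calc |m a + e - m b| = |(m a - m b) + e| := by ring_nf
            _ ≤ |m a - m b| + |e| := abs_add_le _ _
            _ ≤ K * |a - b| + |e| := by linarith [hm a b]
      _ = L * (K * (a - b) ^ 2 + |a - b| * |e|) := by rw [← sq_abs (a - b)]; ring
  have hyoung : 2 * (|a - b| * |e|) ≤ ρ ^ 2 * (a - b) ^ 2 + e ^ 2 / ρ ^ 2 := by
    have h := two_mul_le_add_sq (|ρ| * |a - b|) (|e| / |ρ|)
    have hprod : |ρ| * |a - b| * (|e| / |ρ|) = |a - b| * |e| := by
      field_simp [abs_ne_zero.mpr hρ]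
    rwa [mul_assoc 2, hprod, mul_pow, div_pow, sq_abs, sq_abs, sq_abs] at h
  have hρL : 0 ≤ L * ρ ^ 2 * (a - b) ^ 2 + L * (e ^ 2 / ρ ^ 2) := by positivity
  have hLyoung := mul_le_mul_of_nonneg_left hyoung hL
  rw [div_eq_mul_inv] at hLyoung hρL ⊢
  linarith

lemma two_mul_sub_mul_sub_le_of_deriv {f : ℝ → ℝ → ℝ} {m : ℝ → ℝ} {α L K ρ : ℝ}
    (hf : ContDiff ℝ 1 fun p : ℝ × ℝ => f p.1 p.2) (hfx : ∀ a c, deriv (f · c) a ≤ -α)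
    (hfy : ∀ a c, |deriv (f a ·) c| ≤ L) (hm : Differentiable ℝ m) (hm' : ∀ a, |deriv m a| ≤ K)
    (hρ : ρ ≠ 0) (a b e : ℝ) :
    2 * (a - b) * (f a (m a + e) - f b (m b)) ≤
      2 * (L * (K + ρ ^ 2) - α) * (a - b) ^ 2 + 2 * (L / ρ ^ 2) * e ^ 2 :=
  two_mul_sub_mul_sub_le
    (fun a b c => mul_sub_le_of_deriv_le
      ((hf.comp (contDiff_id.prodMk contDiff_const)).differentiable one_ne_zero) (hfx · c) a b)
    (fun a c c' => abs_sub_le_of_abs_deriv_le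
      ((hf.comp (contDiff_const.prodMk contDiff_id)).differentiable one_ne_zero) (hfy a) c c')
    ((abs_nonneg _).trans (hfy 0 0)) (abs_sub_le_of_abs_deriv_le hm hm') hρ a b e

lemma abs_sq_le_sq_of_abs_le {a C : ℝ} (h : |a| ≤ C) : |a ^ 2| ≤ C ^ 2 := by
  rw [abs_pow]
  exact pow_le_pow_left₀ (abs_nonneg _) h 2

lemma abs_mul_sub_le_of_abs_le {a b c C D : ℝ} (hc : |c| ≤ C) (ha : |a| ≤ D) (hb : |b| ≤ D) :
    |c * (b - a)| ≤ C * (2 * D) := by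
  rw [abs_mul, two_mul]
  exact mul_le_mul hc ((abs_sub _ _).trans (add_le_add hb ha)) (abs_nonneg _)
    ((abs_nonneg _).trans hc)

theorem hasDerivWithinAt_integral_of_bound {E : Type*} [MeasurableSpace E] {μ : Measure E}
    {F F' : ℝ → E → ℝ} {s : Set ℝ} {t₀ : ℝ} {bound : E → ℝ} (hs : Convex ℝ s) (ht₀ : t₀ ∈ s)
    (hF_int : ∀ r ∈ s, Integrable (F r) μ)
    (hF' : ∀ᵐ u ∂μ, ∀ r ∈ s, HasDerivWithinAt (F · u) (F' r u) s r)
    (h_bound : ∀ᵐ u ∂μ, ∀ r ∈ s, |F' r u| ≤ bound u) (bound_integrable : Integrable bound μ) :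
    HasDerivWithinAt (fun r => ∫ u, F r u ∂μ) (∫ u, F' t₀ u ∂μ) s t₀ := by
  rw [hasDerivWithinAt_iff_tendsto_slope]
  have hmem : ∀ᶠ r in 𝓝[s \ {t₀}] t₀, r ∈ s \ {t₀} := self_mem_nhdsWithin
  have hslope_int : ∀ r ∈ s, Integrable (fun u => slope (F · u) t₀ r) μ := fun r hr =>
    ((hF_int r hr).sub (hF_int t₀ ht₀)).smul (r - t₀)⁻¹
  refine Tendsto.congr' (hmem.mono fun r hr => ?_) <|
    tendsto_integral_filter_of_dominated_convergence bound
      (hmem.mono fun r hr => (hslope_int r hr.1).aestronglyMeasurable) (hmem.mono fun r hr => ?_)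
      bound_integrable (hF'.mono fun u hu => hasDerivWithinAt_iff_tendsto_slope.mp (hu t₀ ht₀))
  · simp only [slope_def_module]
    rw [integral_smul, integral_sub (hF_int r hr.1) (hF_int t₀ ht₀)]
  · filter_upwards [hF', h_bound] with u hu hbu
    have hmvt := hs.norm_image_sub_le_of_norm_hasDerivWithin_le (f := (F · u)) hu hbu ht₀ hr.1
    have hne : 0 < ‖r - t₀‖ := norm_pos_iff.mpr (sub_ne_zero.mpr hr.2)
    rw [slope_def_module, norm_smul, norm_inv, inv_mul_le_iff₀ hne, mul_comm]
    exact hmvt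

section FiniteMeasure

variable {E : Type*} [MeasurableSpace E] {μ : Measure E} [IsFiniteMeasure μ]

lemma integrable_of_abs_le {g : E → ℝ} (hg : Measurable g) (C : ℝ)
    (hC : ∀ u, |g u| ≤ C) : Integrable g μ :=
  .of_bound hg.aestronglyMeasurable C (.of_forall hC)

theorem hasDerivWithinAt_integral_sq_sub {y Y p q : ℝ → E → ℝ} {s : Set ℝ} {t₀ C D : ℝ}
    (hs : Convex ℝ s) (ht₀ : t₀ ∈ s) (hy : ∀ r ∈ s, Measurable (y r))
    (hY : ∀ r ∈ s, Measurable (Y r)) (hyC : ∀ r ∈ s, ∀ u, |y r u| ≤ C)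
    (hYC : ∀ r ∈ s, ∀ u, |Y r u| ≤ C)
    (hy' : ∀ᵐ u ∂μ, ∀ r ∈ s, HasDerivWithinAt (y · u) (p r u) s r)
    (hY' : ∀ᵐ u ∂μ, ∀ r ∈ s, HasDerivWithinAt (Y · u) (q r u) s r)
    (hpq : ∀ᵐ u ∂μ, ∀ r ∈ s, |p r u| ≤ D ∧ |q r u| ≤ D) :
    HasDerivWithinAt (fun r => ∫ u, (y r u - Y r u) ^ 2 ∂μ)
      (∫ u, 2 * (y t₀ u - Y t₀ u) * (p t₀ u - q t₀ u) ∂μ) s t₀ := by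
  have hdiff : ∀ r ∈ s, ∀ u, |y r u - Y r u| ≤ 2 * C := fun r hr u => by
    linarith [abs_sub (y r u) (Y r u), hyC r hr u, hYC r hr u]
  refine hasDerivWithinAt_integral_of_bound (F := fun r u => (y r u - Y r u) ^ 2)
    (F' := fun r u => 2 * (y r u - Y r u) * (p r u - q r u)) hs ht₀
    (fun r hr => integrable_of_abs_le (μ := μ) (((hy r hr).sub (hY r hr)).pow_const 2) _
      fun u => abs_sq_le_sq_of_abs_le (hdiff r hr u)) ?_ ?_
    (integrable_const (2 * (2 * C) * (2 * D)))
  · filter_upwards [hy', hY'] with u hyu hYu r hr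
    exact (((hyu r hr).fun_sub (hYu r hr)).pow 2).congr_deriv (by ring)
  · filter_upwards [hpq] with u hu r hr
    exact abs_mul_sub_le_of_abs_le (by rw [abs_mul, abs_two]; linarith [hdiff r hr u])
      (hu r hr).2 (hu r hr).1

end FiniteMeasure

/-- The operator `K_J` of the paper is `nonlocalOp (volume.restrict Ω) (fun u v => J (u - v))`. -/
noncomputable def nonlocalOp {E : Type*} [MeasurableSpace E] (μ : Measure E) (k : E → E → ℝ)
    (w : E → ℝ) (u : E) : ℝ :=
  ∫ v, k u v * (w v - w u) ∂μ

section NonlocalOp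

variable {E : Type*} [MeasurableSpace E] {μ : Measure E} {k : E → E → ℝ} {w : E → ℝ}
  {Ck Cw : ℝ}

lemma measurable_nonlocalOp [SFinite μ] (hk : Measurable (uncurry k)) (hw : Measurable w) :
    Measurable (nonlocalOp μ k w) :=
  (StronglyMeasurable.integral_prod_right' (f := fun p : E × E => k p.1 p.2 * (w p.2 - w p.1))
    (by fun_prop : Measurable _).stronglyMeasurable).measurable

lemma integrable_nonlocal_integrand [IsFiniteMeasure μ] (u : E) (hk : Measurable (k u))
    (hkC : ∀ v, |k u v| ≤ Ck) (hw : Measurable w) (hwC : ∀ u, |w u| ≤ Cw) :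
    Integrable (fun v => k u v * (w v - w u)) μ :=
  integrable_of_abs_le (by fun_prop) _ fun _ => abs_mul_sub_le_of_abs_le (hkC _) (hwC _) (hwC _)

lemma nonlocalOp_sub {w' : E → ℝ} (u : E) (hw : Integrable (fun v => k u v * (w v - w u)) μ)
    (hw' : Integrable (fun v => k u v * (w' v - w' u)) μ) :
    nonlocalOp μ k w u - nonlocalOp μ k w' u = nonlocalOp μ k (w - w') u := by
  rw [nonlocalOp, nonlocalOp, ← integral_sub hw hw']
  congr 1 with v
  simp only [Pi.sub_apply]
  ring

variable [IsFiniteMeasure μ]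

lemma integrable_mul_nonlocal_integrand_prod (hk : Measurable (uncurry k))
    (hkC : ∀ u v, |k u v| ≤ Ck) (hw : Measurable w) (hwC : ∀ u, |w u| ≤ Cw) :
    Integrable (fun p : E × E => w p.1 * (k p.1 p.2 * (w p.2 - w p.1))) (μ.prod μ) := by
  refine integrable_of_abs_le (by fun_prop) (Cw * (Ck * (2 * Cw))) fun p => ?_
  rw [abs_mul]
  exact mul_le_mul (hwC p.1) (abs_mul_sub_le_of_abs_le (hkC _ _) (hwC _) (hwC _)) (abs_nonneg _)
    ((abs_nonneg _).trans (hwC p.1))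

lemma integrable_mul_nonlocalOp (hk : Measurable (uncurry k)) (hkC : ∀ u v, |k u v| ≤ Ck)
    (hw : Measurable w) (hwC : ∀ u, |w u| ≤ Cw) :
    Integrable (fun u => w u * nonlocalOp μ k w u) μ := by
  simpa only [nonlocalOp, integral_const_mul] using
    (integrable_mul_nonlocal_integrand_prod (μ := μ) hk hkC hw hwC).integral_prod_left

lemma integral_mul_nonlocalOp_nonpos (hk : Measurable (uncurry k)) (hkC : ∀ u v, |k u v| ≤ Ck)
    (hk_nonneg : ∀ u v, 0 ≤ k u v) (hk_symm : ∀ u v, k u v = k v u)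
    (hw : Measurable w) (hwC : ∀ u, |w u| ≤ Cw) :
    ∫ u, w u * nonlocalOp μ k w u ∂μ ≤ 0 := by
  set H : E × E → ℝ := fun p => k p.1 p.2 * (w p.2 ^ 2 - w p.1 ^ 2)
  have hH_int : Integrable H (μ.prod μ) :=
    integrable_of_abs_le (by fun_prop) (Ck * (2 * Cw ^ 2)) fun p =>
      abs_mul_sub_le_of_abs_le (hkC _ _) (abs_sq_le_sq_of_abs_le (hwC _))
        (abs_sq_le_sq_of_abs_le (hwC _))
  have hH_zero : ∫ p, H p ∂(μ.prod μ) = 0 := by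
    have hswap : ∫ p, H p.swap ∂(μ.prod μ) = ∫ p, H p ∂(μ.prod μ) := integral_prod_swap H
    have hanti : ∀ p, H p.swap = -H p := fun p => by
      simp only [H, Prod.fst_swap, Prod.snd_swap, hk_symm p.2 p.1]
      ring
    simp only [hanti, integral_neg] at hswap
    linarith
  have hprod := integrable_mul_nonlocal_integrand_prod (μ := μ) hk hkC hw hwC
  calc ∫ u, w u * nonlocalOp μ k w u ∂μ
      = ∫ p, w p.1 * (k p.1 p.2 * (w p.2 - w p.1)) ∂(μ.prod μ) := by
        rw [integral_prod _ hprod]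
        simp only [nonlocalOp, integral_const_mul]
    _ ≤ ∫ p, H p / 2 ∂(μ.prod μ) :=
        integral_mono hprod (hH_int.div_const 2) fun p => by
          have := mul_nonneg (hk_nonneg p.1 p.2) (sq_nonneg (w p.2 - w p.1))
          simp only [H]
          linarith
    _ = 0 := by rw [integral_div, hH_zero, zero_div]

theorem integral_two_mul_sub_mul_sub_le (hk : Measurable (uncurry k)) (hkC : ∀ u v, |k u v| ≤ Ck)
    (hk_nonneg : ∀ u v, 0 ≤ k u v) (hk_symm : ∀ u v, k u v = k v u)
    {a b e ra rb : E → ℝ} {C Ce D c₁ c₂ : ℝ} (ha : Measurable a) (hb : Measurable b)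
    (he : Measurable e) (haC : ∀ u, |a u| ≤ C) (hbC : ∀ u, |b u| ≤ C) (heC : ∀ u, |e u| ≤ Ce)
    (hra : Measurable ra) (hrb : Measurable rb)
    (hD : ∀ᵐ u ∂μ, |ra u + nonlocalOp μ k a u| ≤ D ∧ |rb u + nonlocalOp μ k b u| ≤ D)
    (hr : ∀ u, 2 * (a u - b u) * (ra u - rb u) ≤ c₁ * (a u - b u) ^ 2 + c₂ * e u ^ 2) :
    ∫ u, 2 * (a u - b u) * ((ra u + nonlocalOp μ k a u) - (rb u + nonlocalOp μ k b u)) ∂μ ≤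
      c₁ * ∫ u, (a u - b u) ^ 2 ∂μ + c₂ * ∫ u, e u ^ 2 ∂μ := by
  have hdiff : ∀ u, |a u - b u| ≤ 2 * C := fun u => by
    linarith [abs_sub (a u) (b u), haC u, hbC u]
  have hsplit : ∀ u, 2 * (a u - b u) * ((ra u + nonlocalOp μ k a u) - (rb u + nonlocalOp μ k b u))
      = 2 * (a u - b u) * (ra u - rb u) + 2 * ((a - b) u * nonlocalOp μ k (a - b) u) := fun u => by
    rw [← nonlocalOp_sub u
      (integrable_nonlocal_integrand u (hk.comp measurable_prodMk_left) (hkC u) ha haC)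
      (integrable_nonlocal_integrand u (hk.comp measurable_prodMk_left) (hkC u) hb hbC),
      Pi.sub_apply]
    ring
  have hlhs_int : Integrable
      (fun u => 2 * (a u - b u) * ((ra u + nonlocalOp μ k a u) - (rb u + nonlocalOp μ k b u))) μ :=
    have := measurable_nonlocalOp (μ := μ) hk ha
    have := measurable_nonlocalOp (μ := μ) hk hb
    .of_bound (by fun_prop) (2 * (2 * C) * (2 * D))
      (hD.mono fun u hu => abs_mul_sub_le_of_abs_le
        (by rw [abs_mul, abs_two]; linarith [hdiff u]) hu.2 hu.1)
  have hsq_int : Integrable (fun u => (a u - b u) ^ 2) μ :=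
    integrable_of_abs_le ((ha.sub hb).pow_const 2) _ fun u => abs_sq_le_sq_of_abs_le (hdiff u)
  have he_int : Integrable (fun u => e u ^ 2) μ :=
    integrable_of_abs_le (he.pow_const 2) _ fun u => abs_sq_le_sq_of_abs_le (heC u)
  have hreaction_int := (hsq_int.const_mul c₁).fun_add (he_int.const_mul c₂)
  have hnonlocal_int := (integrable_mul_nonlocalOp (μ := μ) hk hkC (ha.sub hb) hdiff).const_mul 2
  calc _ ≤ ∫ u, (c₁ * (a u - b u) ^ 2 + c₂ * e u ^ 2 +
          2 * ((a - b) u * nonlocalOp μ k (a - b) u)) ∂μ :=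
        integral_mono hlhs_int (hreaction_int.fun_add hnonlocal_int) fun u =>
          (hsplit u).trans_le (add_le_add_left (hr u) _)
    _ = c₁ * (∫ u, (a u - b u) ^ 2 ∂μ) + c₂ * (∫ u, e u ^ 2 ∂μ) +
          2 * ∫ u, (a - b) u * nonlocalOp μ k (a - b) u ∂μ := by
        rw [integral_add hreaction_int hnonlocal_int, integral_add (hsq_int.const_mul _)
          (he_int.const_mul _), integral_const_mul, integral_const_mul, integral_const_mul]
    _ ≤ _ := by
        linarith [integral_mul_nonlocalOp_nonpos (μ := μ) hk hkC hk_nonneg hk_symm (ha.sub hb)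
          hdiff]

end NonlocalOp

theorem stmt5_general (n : ℕ) (Ω : Set (Fin n → ℝ)) (hΩm : MeasurableSet Ω)
    (hΩfin : volume Ω < ⊤)
    (J : (Fin n → ℝ) → ℝ) (hJc : Continuous J) (CJ : ℝ) (hJbd : ∀ z, |J z| ≤ CJ)
    (hJnn : ∀ z, 0 ≤ J z) (hJsym : ∀ z, J (-z) = J z)
    (α β γ M N δ ρ T : ℝ) (hρ : 0 < ρ)
    (f : ℝ → ℝ → ℝ) (hf : ContDiff ℝ 1 (fun p : ℝ × ℝ => f p.1 p.2))
    (hfx : ∀ a b : ℝ, deriv (fun s => f s b) a ≤ -α)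
    (hfy : ∀ a b : ℝ, 0 ≤ deriv (fun s => f a s) b ∧ deriv (fun s => f a s) b ≤ β * N)
    (m : ℝ → ℝ) (hmC : ContDiff ℝ 1 m)
    (hm' : ∀ a : ℝ, 0 ≤ deriv m a ∧ deriv m a ≤ γ * M / δ)
    (x X η : ℝ → (Fin n → ℝ) → ℝ)
    (hxc : Continuous (fun p : ℝ × (Fin n → ℝ) => x p.1 p.2))
    (hXc : Continuous (fun p : ℝ × (Fin n → ℝ) => X p.1 p.2))
    (hηc : Continuous (fun p : ℝ × (Fin n → ℝ) => η p.1 p.2))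
    (Cb : ℝ) (hb : ∀ t u, |x t u| ≤ Cb ∧ |X t u| ≤ Cb ∧ |η t u| ≤ Cb)
    -- the equations: x and X are continuously differentiable in t on [0,T], with
    -- time-derivatives given by the right-hand sides of the system
    (hxeq : ∀ t ∈ Set.Icc (0 : ℝ) T, ∀ u ∈ Ω,
      HasDerivWithinAt (fun s => x s u)
        (f (x t u) (m (x t u) + η t u) + ∫ v in Ω, J (u - v) * (x t v - x t u))
        (Set.Icc 0 T) t)
    (hXeq : ∀ t ∈ Set.Icc (0 : ℝ) T, ∀ u ∈ Ω,
      HasDerivWithinAt (fun s => X s u)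
        (f (X t u) (m (X t u)) + ∫ v in Ω, J (u - v) * (X t v - X t u))
        (Set.Icc 0 T) t)
    -- bounded time-derivatives
    (Cd : ℝ)
    (hder : ∀ t ∈ Set.Icc (0 : ℝ) T, ∀ u ∈ Ω,
      |f (x t u) (m (x t u) + η t u) + ∫ v in Ω, J (u - v) * (x t v - x t u)| ≤ Cd ∧
      |f (X t u) (m (X t u)) + ∫ v in Ω, J (u - v) * (X t v - X t u)| ≤ Cd) :
    ∀ t ∈ Set.Icc (0 : ℝ) T, ∃ D : ℝ,
      HasDerivWithinAt (fun s => ∫ u in Ω, (x s u - X s u) ^ 2) D (Set.Icc 0 T) t ∧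
      D ≤ 2 * (β * N * (γ * M / δ + ρ ^ 2) - α) * (∫ u in Ω, (x t u - X t u) ^ 2) +
            2 * (β * N / ρ ^ 2) * ∫ u in Ω, (η t u) ^ 2 := by
  intro t₀ ht₀
  have : Fact (volume Ω < ⊤) := ⟨hΩfin⟩
  have measurable_slice : ∀ {y : ℝ → (Fin n → ℝ) → ℝ}, Continuous (fun p : ℝ × (Fin n → ℝ) => y p.1 p.2) →
      ∀ s, Measurable (y s) := fun hy s =>
    (hy.comp (continuous_const.prodMk continuous_id)).measurable
  have hfm : ∀ {a b : (Fin n → ℝ) → ℝ}, Measurable a → Measurable b →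
      Measurable fun u => f (a u) (b u) := fun ha hc =>
    hf.continuous.measurable.comp (ha.prodMk hc)
  have hm := hmC.continuous.measurable
  refine ⟨_, hasDerivWithinAt_integral_sq_sub (convex_Icc 0 T) ht₀ (fun r _ => measurable_slice hxc r)
    (fun r _ => measurable_slice hXc r) (fun r _ u => (hb r u).1) (fun r _ u => (hb r u).2.1)
    (ae_restrict_of_forall_mem hΩm fun u hu r hr => hxeq r hr u hu)
    (ae_restrict_of_forall_mem hΩm fun u hu r hr => hXeq r hr u hu)
    (ae_restrict_of_forall_mem hΩm fun u hu r hr => hder r hr u hu), ?_⟩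
  exact integral_two_mul_sub_mul_sub_le (k := fun u v => J (u - v))
    (hJc.comp continuous_sub).measurable (fun u v => hJbd _) (fun u v => hJnn _)
    (fun u v => by rw [← hJsym, neg_sub]) (measurable_slice hxc t₀) (measurable_slice hXc t₀) (measurable_slice hηc t₀)
    (hb t₀ · |>.1) (hb t₀ · |>.2.1) (hb t₀ · |>.2.2)
    (hfm (measurable_slice hxc t₀) ((hm.comp (measurable_slice hxc t₀)).add (measurable_slice hηc t₀)))
    (hfm (measurable_slice hXc t₀) (hm.comp (measurable_slice hXc t₀)))
    (ae_restrict_of_forall_mem hΩm fun u hu => hder t₀ ht₀ u hu)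
    fun u => two_mul_sub_mul_sub_le_of_deriv hf hfx
      (fun a c => (abs_of_nonneg (hfy a c).1).trans_le (hfy a c).2) (hmC.differentiable one_ne_zero)
      (fun a => (abs_of_nonneg (hm' a).1).trans_le (hm' a).2) hρ.ne' _ _ _

/-- Differential inequality for the L² distance. With Ω, J as in (H_J),
α, β, γ, M, N, δ, ρ > 0, f C¹ with ∂f/∂x ≤ -α and 0 ≤ ∂f/∂y ≤ βN, m C¹ with
0 ≤ m' ≤ γM/δ, T > 0, and x, X, η continuous, bounded, continuously differentiable in
time with bounded time-derivative satisfying ∂x/∂t = f(x, m(x)+η) + K_J x and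
∂X/∂t = f(X, m(X)) + K_J X on [0,T] × Ω, one has for every t ∈ [0,T]
d/dt ∫_Ω (x-X)² ≤ 2C₁ ∫_Ω (x-X)² + 2C₂ ∫_Ω η², with C₁ = βN(γM/δ + ρ²) - α, C₂ = βN/ρ². -/
theorem stmt5 (n : ℕ) (Ω : Set (Fin n → ℝ)) (hΩm : MeasurableSet Ω)
    (hΩb : Bornology.IsBounded Ω) (hΩpos : 0 < volume Ω) (hΩfin : volume Ω < ⊤)
    (J : (Fin n → ℝ) → ℝ) (hJc : Continuous J) (CJ : ℝ) (hJbd : ∀ z, |J z| ≤ CJ)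
    (hJnn : ∀ z, 0 ≤ J z) (hJsym : ∀ z, J (-z) = J z)
    (hJint : Integrable J) (hJ1 : ∫ z, J z = 1)
    (α β γ M N δ ρ T : ℝ) (hα : 0 < α) (hβ : 0 < β) (hγ : 0 < γ)
    (hM : 0 < M) (hN : 0 < N) (hδ : 0 < δ) (hρ : 0 < ρ) (hT : 0 < T)
    (f : ℝ → ℝ → ℝ) (hf : ContDiff ℝ 1 (fun p : ℝ × ℝ => f p.1 p.2))
    (hfx : ∀ a b : ℝ, deriv (fun s => f s b) a ≤ -α)
    (hfy : ∀ a b : ℝ, 0 ≤ deriv (fun s => f a s) b ∧ deriv (fun s => f a s) b ≤ β * N)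
    (m : ℝ → ℝ) (hmC : ContDiff ℝ 1 m)
    (hm' : ∀ a : ℝ, 0 ≤ deriv m a ∧ deriv m a ≤ γ * M / δ)
    (x X η : ℝ → (Fin n → ℝ) → ℝ)
    (hxc : Continuous (fun p : ℝ × (Fin n → ℝ) => x p.1 p.2))
    (hXc : Continuous (fun p : ℝ × (Fin n → ℝ) => X p.1 p.2))
    (hηc : Continuous (fun p : ℝ × (Fin n → ℝ) => η p.1 p.2))
    (Cb : ℝ) (hb : ∀ t u, |x t u| ≤ Cb ∧ |X t u| ≤ Cb ∧ |η t u| ≤ Cb)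
    -- the equations: x and X are continuously differentiable in t on [0,T], with
    -- time-derivatives given by the right-hand sides of the system
    (hxeq : ∀ t ∈ Set.Icc (0 : ℝ) T, ∀ u ∈ Ω,
      HasDerivWithinAt (fun s => x s u)
        (f (x t u) (m (x t u) + η t u) + ∫ v in Ω, J (u - v) * (x t v - x t u))
        (Set.Icc 0 T) t)
    (hXeq : ∀ t ∈ Set.Icc (0 : ℝ) T, ∀ u ∈ Ω,
      HasDerivWithinAt (fun s => X s u)
        (f (X t u) (m (X t u)) + ∫ v in Ω, J (u - v) * (X t v - X t u))
        (Set.Icc 0 T) t)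
    -- bounded time-derivatives
    (Cd : ℝ)
    (hder : ∀ t ∈ Set.Icc (0 : ℝ) T, ∀ u ∈ Ω,
      |f (x t u) (m (x t u) + η t u) + ∫ v in Ω, J (u - v) * (x t v - x t u)| ≤ Cd ∧
      |f (X t u) (m (X t u)) + ∫ v in Ω, J (u - v) * (X t v - X t u)| ≤ Cd) :
    ∀ t ∈ Set.Icc (0 : ℝ) T, ∃ D : ℝ,
      HasDerivWithinAt (fun s => ∫ u in Ω, (x s u - X s u) ^ 2) D (Set.Icc 0 T) t ∧
      D ≤ 2 * (β * N * (γ * M / δ + ρ ^ 2) - α) * (∫ u in Ω, (x t u - X t u) ^ 2) +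
            2 * (β * N / ρ ^ 2) * ∫ u in Ω, (η t u) ^ 2 :=
  stmt5_general n Ω hΩm hΩfin J hJc CJ hJbd hJnn hJsym α β γ M N δ ρ T hρ f hf hfx hfy m hmC hm' x X
    η hxc hXc hηc Cb hb hxeq hXeq Cd hder
end

section
/- (Conditional form of Corollary 4.3.) Under the same setting and hypotheses as the conditional form of Theorem 4.1, assume additionally that α/(βN) − γM/δ > 0. Then there exist positive constants ε₀, m, M₂ such that for all ε ∈ (0, ε₀) and all t ∈ [0,T]: ‖x^ε(t) − X(t)‖²_{L²(Ω)} ≤ e^{−m t} ( ‖x^ε(0) − X(0)‖²_{L²(Ω)} + ε M₂ ). -/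
/-!
Energy method. For `w = x^ε - X`,
`d/dt ‖w‖² = 2⟨w, f(x^ε, m(x^ε) + η^ε) - f(X, m(X))⟩ + 2⟨w, K_J w⟩`.
The nonlocal term is nonpositive because `J` is symmetric, and the one-sided Lipschitz bound
`∂f/∂x ≤ -α` beats the coupling `βN · γM/δ` through `m`; with Young's inequality this gives
`d/dt ‖w‖² ≤ -λ ‖w‖² + (βN)²/λ ‖η^ε‖²`, `λ = α - βN · γM/δ > 0`. The decay estimate bounds
`‖η^ε‖²` by `O(ε) + B² e^{-δt/ε}`, and an integrating factor turns this into the claim with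
`m₀ = λ`: once `ε < δ/(2λ)` the transient `e^{-δt/ε}` contributes only `O(ε)`.
-/

open MeasureTheory Real Filter Set Function Topology

lemma sub_mul_sub_le_of_deriv_le {g : ℝ → ℝ} (hg : Differentiable ℝ g) {α : ℝ}
    (hd : ∀ x, deriv g x ≤ -α) (a b : ℝ) : (a - b) * (g a - g b) ≤ -α * (a - b) ^ 2 := by
  rcases le_total a b with hab | hab
  · nlinarith [image_sub_le_mul_sub_of_deriv_le hg hd hab]
  · nlinarith [image_sub_le_mul_sub_of_deriv_le hg hd hab]

lemma abs_sub_le_of_deriv_mem_Icc {g : ℝ → ℝ} (hg : Differentiable ℝ g) {L : ℝ}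
    (hd : ∀ x, 0 ≤ deriv g x ∧ deriv g x ≤ L) (a b : ℝ) : |g a - g b| ≤ L * |a - b| :=
  convex_univ.norm_image_sub_le_of_norm_deriv_le (fun x _ => hg x)
    (fun x _ => abs_le.2 ⟨by linarith [hd x], (hd x).2⟩) (mem_univ b) (mem_univ a)

lemma reaction_estimate {f : ℝ → ℝ → ℝ} {m : ℝ → ℝ} {α L L' : ℝ}
    (hf : ContDiff ℝ 1 (fun p : ℝ × ℝ => f p.1 p.2)) (hfx : ∀ a b, deriv (fun s => f s b) a ≤ -α)
    (hfy : ∀ a b, 0 ≤ deriv (fun s => f a s) b ∧ deriv (fun s => f a s) b ≤ L)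
    (hm : ContDiff ℝ 1 m) (hm' : ∀ a, 0 ≤ deriv m a ∧ deriv m a ≤ L')
    (hlam : 0 < α - L * L') (x y e : ℝ) :
    2 * (x - y) * (f x (m x + e) - f y (m y)) ≤
      -(α - L * L') * (x - y) ^ 2 + L ^ 2 / (α - L * L') * e ^ 2 := by
  have hdf := hf.differentiable one_ne_zero
  have hL : 0 ≤ L := (hfy 0 0).1.trans (hfy 0 0).2
  have hx : (x - y) * (f x (m x + e) - f y (m x + e)) ≤ -α * (x - y) ^ 2 :=
    sub_mul_sub_le_of_deriv_le (hdf.comp (differentiable_id.prodMk (differentiable_const _)))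
      (fun a => hfx a _) x y
  have hm_lip := abs_sub_le_of_deriv_mem_Icc (hm.differentiable one_ne_zero) hm' x y
  have hy : |f y (m x + e) - f y (m y)| ≤ L * (L' * |x - y| + |e|) := by
    calc |f y (m x + e) - f y (m y)| ≤ L * |m x + e - m y| :=
          abs_sub_le_of_deriv_mem_Icc (hdf.comp ((differentiable_const _).prodMk differentiable_id))
            (hfy y) _ _
      _ ≤ L * (L' * |x - y| + |e|) := by
          gcongr
          calc |m x + e - m y| = |(m x - m y) + e| := by rw [add_sub_right_comm]
            _ ≤ |m x - m y| + |e| := abs_add_le _ _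
            _ ≤ L' * |x - y| + |e| := by gcongr
  set lam := α - L * L'
  have hxy :
      (x - y) * (f y (m x + e) - f y (m y)) ≤ L * L' * (x - y) ^ 2 + L * (|x - y| * |e|) := by
    calc (x - y) * (f y (m x + e) - f y (m y)) ≤ |x - y| * |f y (m x + e) - f y (m y)| := by
          rw [← abs_mul]; exact le_abs_self _
      _ ≤ |x - y| * (L * (L' * |x - y| + |e|)) := by gcongr
      _ = L * L' * (x - y) ^ 2 + L * (|x - y| * |e|) := by rw [← sq_abs (x - y)]; ring
  have young : 2 * L * (|x - y| * |e|) ≤ lam * (x - y) ^ 2 + L ^ 2 / lam * e ^ 2 := by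
    have hK : L ^ 2 / lam * lam = L ^ 2 := div_mul_cancel₀ _ hlam.ne'
    rw [← sq_abs (x - y), ← sq_abs e, ← mul_le_mul_iff_right₀ hlam]
    nlinarith [sq_nonneg (lam * |x - y| - L * |e|)]
  linarith

lemma abs_sub_le_two_mul_of_abs_le {S : Type*} {x : S → ℝ} {C : ℝ} (hC : ∀ u, |x u| ≤ C)
    (u v : S) : |x v - x u| ≤ 2 * C := by
  linarith [abs_sub (x v) (x u), hC u, hC v]

section Nonlocal

variable {S : Type*} [MeasurableSpace S] {μ : Measure S} {k : S → S → ℝ} {x y : S → ℝ} {C : ℝ}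

/-- `nonlocalOperator (volume.restrict Ω) (fun u v => J (u - v))` is the paper's `K_J` on `Ω`. -/
noncomputable def nonlocalOperator (μ : Measure S) (k : S → S → ℝ) (x : S → ℝ) (u : S) : ℝ :=
  ∫ v, k u v * (x v - x u) ∂μ

lemma integrable_kernel_mul_sub (hk : Integrable (uncurry k) (μ.prod μ))
    (hx : AEStronglyMeasurable x μ) (hC : ∀ u, |x u| ≤ C) :
    Integrable (fun p : S × S => k p.1 p.2 * (x p.2 - x p.1)) (μ.prod μ) :=
  hk.mul_bdd (hx.comp_snd.sub hx.comp_fst)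
    (ae_of_all _ fun _ => abs_sub_le_two_mul_of_abs_le hC _ _)

lemma integrable_nonlocalOperator [SFinite μ] (hk : Integrable (uncurry k) (μ.prod μ))
    (hx : AEStronglyMeasurable x μ) (hC : ∀ u, |x u| ≤ C) :
    Integrable (nonlocalOperator μ k x) μ :=
  (integrable_kernel_mul_sub hk hx hC).integral_prod_left

lemma nonlocalOperator_sub {u : S} (hku : Integrable (k u) μ) (hx : AEStronglyMeasurable x μ)
    (hy : AEStronglyMeasurable y μ) {Cx Cy : ℝ} (hxC : ∀ u, |x u| ≤ Cx) (hyC : ∀ u, |y u| ≤ Cy) :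
    nonlocalOperator μ k x u - nonlocalOperator μ k y u =
      nonlocalOperator μ k (fun v => x v - y v) u := by
  have hint {z : S → ℝ} {Cz : ℝ} (hz : AEStronglyMeasurable z μ) (hzC : ∀ u, |z u| ≤ Cz) :
      Integrable (fun v => k u v * (z v - z u)) μ :=
    hku.mul_bdd (hz.sub aestronglyMeasurable_const)
      (ae_of_all _ fun v => abs_sub_le_two_mul_of_abs_le hzC u v)
  simp only [nonlocalOperator]
  rw [← integral_sub (hint hx hxC) (hint hy hyC)]
  congr 1 with v
  ring

/-- By the symmetry of `k`, `∫ x K x = -½ ∬ k(u, v) (x(u) - x(v))²`. -/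
lemma integral_mul_nonlocalOperator_nonpos [SFinite μ] (hk : Integrable (uncurry k) (μ.prod μ))
    (hk_symm : ∀ u v, k u v = k v u) (hk_nonneg : ∀ u v, 0 ≤ k u v)
    (hx : AEStronglyMeasurable x μ) (hC : ∀ u, |x u| ≤ C) :
    ∫ u, x u * nonlocalOperator μ k x u ∂μ ≤ 0 := by
  set F : S × S → ℝ := fun p => x p.1 * (k p.1 p.2 * (x p.2 - x p.1))
  have hF : Integrable F (μ.prod μ) :=
    (integrable_kernel_mul_sub hk hx hC).bdd_mul hx.comp_fst (ae_of_all _ fun p => hC p.1)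
  have hsum : ∀ p, F p + F p.swap = -(k p.1 p.2 * (x p.1 - x p.2) ^ 2) := fun p => by
    simp only [F, Prod.fst_swap, Prod.snd_swap, hk_symm p.2 p.1]; ring
  have hiter : ∫ u, x u * nonlocalOperator μ k x u ∂μ = ∫ p, F p ∂(μ.prod μ) := by
    rw [integral_prod F hF]
    simp only [nonlocalOperator, F, integral_const_mul]
  have hswap : ∫ p, F p.swap ∂(μ.prod μ) = ∫ p, F p ∂(μ.prod μ) := integral_prod_swap F
  have hnonpos : ∫ p, (F p + F p.swap) ∂(μ.prod μ) ≤ 0 :=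
    integral_nonpos fun p => by
      rw [hsum]; exact neg_nonpos.2 (mul_nonneg (hk_nonneg _ _) (sq_nonneg _))
  have hadd : ∫ p, (F p + F p.swap) ∂(μ.prod μ) =
      ∫ p, F p ∂(μ.prod μ) + ∫ p, F p.swap ∂(μ.prod μ) :=
    integral_add hF hF.swap
  linarith

end Nonlocal

section Energy

variable {S : Type*} [MeasurableSpace S] {μ : Measure S} [IsFiniteMeasure μ] {C : ℝ}

lemma integrable_sq_of_abs_le {w : S → ℝ} (hw : AEStronglyMeasurable w μ) (hC : ∀ u, |w u| ≤ C) :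
    Integrable (fun u => w u ^ 2) μ :=
  Integrable.of_bound (hw.pow 2) (C ^ 2) (ae_of_all _ fun u => by
    rw [norm_pow, Real.norm_eq_abs]; exact pow_le_pow_left₀ (abs_nonneg _) (hC u) 2)

lemma continuous_integral_sq {w : ℝ → S → ℝ} (hw : ∀ s, AEStronglyMeasurable (w s) μ)
    (hcont : ∀ u, Continuous (w · u)) (hC : ∀ s u, |w s u| ≤ C) :
    Continuous fun s => ∫ u, w s u ^ 2 ∂μ :=
  continuous_of_dominated (fun s => (hw s).pow 2)
    (fun s => ae_of_all _ fun u => by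
      rw [norm_pow, Real.norm_eq_abs]; exact pow_le_pow_left₀ (abs_nonneg _) (hC s u) 2)
    (integrable_const (C ^ 2)) (ae_of_all _ fun u => (hcont u).pow 2)

lemma hasDerivAt_integral_sq {w w' : ℝ → S → ℝ} {s₀ C' : ℝ} {U : Set ℝ} (hU : U ∈ 𝓝 s₀)
    (hw : ∀ s, AEStronglyMeasurable (w s) μ) (hw' : AEStronglyMeasurable (w' s₀) μ)
    (hC : ∀ s u, |w s u| ≤ C) (hC' : ∀ᵐ u ∂μ, ∀ s ∈ U, |w' s u| ≤ C')
    (hd : ∀ᵐ u ∂μ, ∀ s ∈ U, HasDerivAt (w · u) (w' s u) s) :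
    HasDerivAt (fun s => ∫ u, w s u ^ 2 ∂μ) (∫ u, 2 * w s₀ u * w' s₀ u ∂μ) s₀ := by
  refine (hasDerivAt_integral_of_dominated_loc_of_deriv_le (bound := fun _ => 2 * C * C')
    (F := fun s u => w s u ^ 2) (F' := fun s u => 2 * w s u * w' s u) hU
    (Eventually.of_forall fun s => (hw s).pow 2)
    (integrable_sq_of_abs_le (hw s₀) (hC s₀))
    ((aestronglyMeasurable_const.mul (hw s₀)).mul hw') ?_ (integrable_const _) ?_).2
  · filter_upwards [hC'] with u hu s hs
    rw [Real.norm_eq_abs, abs_mul, abs_mul, abs_two, mul_assoc, mul_assoc]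
    exact mul_le_mul_of_nonneg_left
      (mul_le_mul (hC s u) (hu s hs) (abs_nonneg _) ((abs_nonneg _).trans (hC s u))) zero_le_two
  · filter_upwards [hd] with u hu s hs
    exact ((hu s hs).fun_pow 2).congr_deriv (by push_cast; ring)

lemma integral_two_mul_add_nonlocalOperator_le {k : S → S → ℝ} {w R ρ : S → ℝ} {lam : ℝ}
    (hk : Integrable (uncurry k) (μ.prod μ)) (hk_symm : ∀ u v, k u v = k v u)
    (hk_nonneg : ∀ u v, 0 ≤ k u v) (hw : AEStronglyMeasurable w μ) (hC : ∀ u, |w u| ≤ C)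
    (hwR : Integrable (fun u => w u * R u) μ) (hρ : Integrable ρ μ)
    (hreact : ∀ᵐ u ∂μ, 2 * w u * R u ≤ -lam * w u ^ 2 + ρ u) :
    ∫ u, 2 * w u * (R u + nonlocalOperator μ k w u) ∂μ ≤ -lam * ∫ u, w u ^ 2 ∂μ + ∫ u, ρ u ∂μ := by
  have hwK : Integrable (fun u => w u * nonlocalOperator μ k w u) μ :=
    (integrable_nonlocalOperator hk hw hC).bdd_mul hw (ae_of_all _ hC)
  have hw2 := integrable_sq_of_abs_le hw hC
  calc ∫ u, 2 * w u * (R u + nonlocalOperator μ k w u) ∂μ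
      = ∫ u, 2 * w u * R u ∂μ + 2 * ∫ u, w u * nonlocalOperator μ k w u ∂μ := by
        rw [← integral_const_mul, ← integral_add]
        · congr 1 with u; ring
        · simpa only [mul_assoc] using hwR.const_mul 2
        · exact hwK.const_mul 2
    _ ≤ ∫ u, (-lam * w u ^ 2 + ρ u) ∂μ + 2 * 0 := by
        gcongr ?_ + 2 * ?_
        · exact integral_mono_ae (by simpa only [mul_assoc] using hwR.const_mul 2)
            ((hw2.const_mul _).add hρ) hreact
        · exact integral_mul_nonlocalOperator_nonpos hk hk_symm hk_nonneg hw hC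
    _ = -lam * ∫ u, w u ^ 2 ∂μ + ∫ u, ρ u ∂μ := by
        rw [integral_add (hw2.const_mul _) hρ, integral_const_mul, mul_zero, add_zero]

theorem energy_inequality {k : S → S → ℝ} {x y F G : ℝ → S → ℝ} {ρ : S → ℝ}
    {T lam Cx Cy Cd s : ℝ}
    (hk : Integrable (uncurry k) (μ.prod μ)) (hk_symm : ∀ u v, k u v = k v u)
    (hk_nonneg : ∀ u v, 0 ≤ k u v)
    (hx : ∀ t, AEStronglyMeasurable (x t) μ) (hy : ∀ t, AEStronglyMeasurable (y t) μ)
    (hxC : ∀ t u, |x t u| ≤ Cx) (hyC : ∀ t u, |y t u| ≤ Cy)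
    (hF : AEStronglyMeasurable (F s) μ) (hG : AEStronglyMeasurable (G s) μ)
    (hx_eq : ∀ᵐ u ∂μ, ∀ t ∈ Icc 0 T,
      HasDerivWithinAt (x · u) (F t u + nonlocalOperator μ k (x t) u) (Icc 0 T) t)
    (hy_eq : ∀ᵐ u ∂μ, ∀ t ∈ Icc 0 T,
      HasDerivWithinAt (y · u) (G t u + nonlocalOperator μ k (y t) u) (Icc 0 T) t)
    (hx_deriv : ∀ᵐ u ∂μ, ∀ t ∈ Icc 0 T, |F t u + nonlocalOperator μ k (x t) u| ≤ Cd)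
    (hy_deriv : ∀ᵐ u ∂μ, ∀ t ∈ Icc 0 T, |G t u + nonlocalOperator μ k (y t) u| ≤ Cd)
    (hρ : Integrable ρ μ)
    (hreact : ∀ᵐ u ∂μ, 2 * (x s u - y s u) * (F s u - G s u) ≤ -lam * (x s u - y s u) ^ 2 + ρ u)
    (hs : s ∈ Ioo 0 T) :
    ∃ D, HasDerivAt (fun t => ∫ u, (x t u - y t u) ^ 2 ∂μ) D s ∧
      D ≤ -lam * ∫ u, (x s u - y s u) ^ 2 ∂μ + ∫ u, ρ u ∂μ := by
  set w : ℝ → S → ℝ := fun t u => x t u - y t u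
  set w' : ℝ → S → ℝ := fun t u =>
    (F t u + nonlocalOperator μ k (x t) u) - (G t u + nonlocalOperator μ k (y t) u)
  have hw t : AEStronglyMeasurable (w t) μ := (hx t).sub (hy t)
  have hwC t u : |w t u| ≤ Cx + Cy := by linarith [abs_sub (x t u) (y t u), hxC t u, hyC t u]
  have hw' : AEStronglyMeasurable (w' s) μ :=
    (hF.add (integrable_nonlocalOperator hk (hx s) (hxC s)).1).sub
      (hG.add (integrable_nonlocalOperator hk (hy s) (hyC s)).1)
  have hw'C : ∀ᵐ u ∂μ, ∀ t ∈ Ioo 0 T, |w' t u| ≤ 2 * Cd := by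
    filter_upwards [hx_deriv, hy_deriv] with u hxu hyu t ht
    have ht' := Ioo_subset_Icc_self ht
    linarith [abs_sub (F t u + nonlocalOperator μ k (x t) u) (G t u + nonlocalOperator μ k (y t) u),
      hxu t ht', hyu t ht']
  have hd : ∀ᵐ u ∂μ, ∀ t ∈ Ioo 0 T, HasDerivAt (w · u) (w' t u) t := by
    filter_upwards [hx_eq, hy_eq] with u hxu hyu t ht
    have hIcc : Icc 0 T ∈ 𝓝 t := Icc_mem_nhds ht.1 ht.2
    exact ((hxu t (Ioo_subset_Icc_self ht)).hasDerivAt hIcc).sub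
      ((hyu t (Ioo_subset_Icc_self ht)).hasDerivAt hIcc)
  have hw'_eq : ∀ᵐ u ∂μ, w' s u = (F s u - G s u) + nonlocalOperator μ k (w s) u := by
    filter_upwards [hk.prod_right_ae] with u hku
    rw [← nonlocalOperator_sub hku (hx s) (hy s) (hxC s) (hyC s)]
    ring
  have hww' : Integrable (fun u => w s u * w' s u) μ :=
    Integrable.of_bound ((hw s).mul hw') ((Cx + Cy) * (2 * Cd)) (by
      filter_upwards [hw'C] with u hu
      rw [Real.norm_eq_abs, abs_mul]
      exact mul_le_mul (hwC s u) (hu s hs) (abs_nonneg _) ((abs_nonneg _).trans (hwC s u)))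
  have hwK : Integrable (fun u => w s u * nonlocalOperator μ k (w s) u) μ :=
    (integrable_nonlocalOperator hk (hw s) (hwC s)).bdd_mul (hw s) (ae_of_all _ (hwC s))
  have hwR : Integrable (fun u => w s u * (F s u - G s u)) μ :=
    (hww'.sub hwK).congr (hw'_eq.mono fun u hu => by rw [Pi.sub_apply, hu]; ring)
  refine ⟨_, hasDerivAt_integral_sq (Ioo_mem_nhds hs.1 hs.2) hw hw' hwC hw'C hd, ?_⟩
  have hD : ∫ u, 2 * w s u * w' s u ∂μ =
      ∫ u, 2 * w s u * ((F s u - G s u) + nonlocalOperator μ k (w s) u) ∂μ :=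
    integral_congr_ae (hw'_eq.mono fun u hu => by simp only [hu])
  rw [hD]
  exact integral_two_mul_add_nonlocalOperator_le hk hk_symm hk_nonneg (hw s) (hwC s) hwR hρ hreact

end Energy

/-- Integrating factor: `e^{λ s} φ(s) - H(s)` is antitone when `H' = e^{λ s} g`. -/
lemma exp_mul_le_of_hasDerivAt_le {φ φ' g H : ℝ → ℝ} {lam T t : ℝ}
    (hφ : ContinuousOn φ (Icc 0 T)) (hφ' : ∀ s ∈ Ioo 0 T, HasDerivAt φ (φ' s) s)
    (hH : ∀ s, HasDerivAt H (exp (lam * s) * g s) s)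
    (hle : ∀ s ∈ Ioo 0 T, φ' s ≤ -lam * φ s + g s) (ht : t ∈ Icc 0 T) :
    exp (lam * t) * φ t ≤ φ 0 + (H t - H 0) := by
  have hexp s : HasDerivAt (fun s => exp (lam * s)) (exp (lam * s) * lam) s := by
    simpa using ((hasDerivAt_id s).const_mul lam).exp
  have hG : AntitoneOn (fun s => exp (lam * s) * φ s - H s) (Icc 0 T) := by
    refine antitoneOn_of_hasDerivWithinAt_nonpos (convex_Icc 0 T)
      (f' := fun s => exp (lam * s) * lam * φ s + exp (lam * s) * φ' s - exp (lam * s) * g s)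
      (((continuous_exp.comp (continuous_const_mul lam)).continuousOn.mul hφ).sub
        (fun s _ => (hH s).continuousAt.continuousWithinAt)) (fun s hs => ?_) (fun s hs => ?_)
    · rw [interior_Icc] at hs
      exact (((hexp s).mul (hφ' s hs)).sub (hH s)).hasDerivWithinAt
    · rw [interior_Icc] at hs
      have := mul_le_mul_of_nonneg_left (hle s hs) (exp_pos (lam * s)).le
      linarith
  have := hG (left_mem_Icc.2 (ht.1.trans ht.2)) ht ht.1
  simp only [mul_zero, exp_zero, one_mul] at this
  linarith

lemma le_exp_neg_mul_of_hasDerivAt_le {φ φ' : ℝ → ℝ} {lam a b c T t : ℝ} (hlam : 0 < lam)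
    (hc : 2 * lam ≤ c) (ha : 0 ≤ a) (hb : 0 ≤ b)
    (hφ : ContinuousOn φ (Icc 0 T)) (hφ' : ∀ s ∈ Ioo 0 T, HasDerivAt φ (φ' s) s)
    (hle : ∀ s ∈ Ioo 0 T, φ' s ≤ -lam * φ s + (a + b * exp (-c * s))) (ht : t ∈ Icc 0 T) :
    φ t ≤ exp (-lam * t) * (φ 0 + a * exp (lam * T) / lam + 2 * b / c) := by
  have hcl : 0 < c - lam := by linarith
  set H : ℝ → ℝ := fun s => a * exp (lam * s) / lam - b * exp (-(c - lam) * s) / (c - lam)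
  have hH s : HasDerivAt H (exp (lam * s) * (a + b * exp (-c * s))) s := by
    have h1 := (((hasDerivAt_id s).const_mul lam).exp.const_mul a).div_const lam
    have h2 := (((hasDerivAt_id s).const_mul (-(c - lam))).exp.const_mul b).div_const (c - lam)
    refine (h1.sub h2).congr_deriv ?_
    simp only [id, mul_one]
    rw [show -c * s = -(c - lam) * s + -(lam * s) by ring, exp_add, exp_neg]
    field_simp
    ring
  have key := exp_mul_le_of_hasDerivAt_le hφ hφ' hH hle ht
  have hH_le : H t - H 0 ≤ a * exp (lam * T) / lam + 2 * b / c := by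
    have h1 : a * exp (lam * t) / lam ≤ a * exp (lam * T) / lam := by
      gcongr; exact ht.2
    have h2 : b / (c - lam) ≤ 2 * b / c := by
      rw [div_le_div_iff₀ hcl (by linarith)]; nlinarith
    have h3 : 0 ≤ b * exp (-(c - lam) * t) / (c - lam) := by positivity
    have h4 : 0 ≤ a / lam := by positivity
    simp only [H, mul_zero, exp_zero, mul_one]
    linarith
  rw [neg_mul, exp_neg, ← div_eq_inv_mul, le_div_iff₀ (exp_pos _), mul_comm]
  linarith

section Model

variable {E : Type*} [NormedAddCommGroup E] [MeasureSpace E] [BorelSpace E]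
  [SecondCountableTopology E]

lemma integrable_uncurry_comp_sub {μ : Measure E} [IsFiniteMeasure μ] {J : E → ℝ}
    (hJc : Continuous J) {CJ : ℝ} (hJbd : ∀ z, |J z| ≤ CJ) :
    Integrable (uncurry fun u v => J (u - v)) (μ.prod μ) :=
  Integrable.of_bound (hJc.comp continuous_sub).aestronglyMeasurable CJ
    (ae_of_all _ fun _ => hJbd _)

theorem integral_sq_sub_le {Ω : Set E} (hΩm : MeasurableSet Ω) (hΩfin : volume Ω < ⊤)
    {J : E → ℝ} (hJc : Continuous J) {CJ : ℝ} (hJbd : ∀ z, |J z| ≤ CJ)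
    (hJnn : ∀ z, 0 ≤ J z) (hJsym : ∀ z, J (-z) = J z)
    {f : ℝ → ℝ → ℝ} {m : ℝ → ℝ} {α L L' : ℝ} (hf : ContDiff ℝ 1 (fun p : ℝ × ℝ => f p.1 p.2))
    (hfx : ∀ a b, deriv (fun s => f s b) a ≤ -α)
    (hfy : ∀ a b, 0 ≤ deriv (fun s => f a s) b ∧ deriv (fun s => f a s) b ≤ L)
    (hm : ContDiff ℝ 1 m) (hm' : ∀ a, 0 ≤ deriv m a ∧ deriv m a ≤ L')
    (hlam : 0 < α - L * L')
    {x η X : ℝ → E → ℝ} {T Cx CX Cd a b c t : ℝ}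
    (hxc : Continuous fun p : ℝ × E => x p.1 p.2) (hηc : Continuous fun p : ℝ × E => η p.1 p.2)
    (hXc : Continuous fun p : ℝ × E => X p.1 p.2)
    (hxC : ∀ s u, |x s u| ≤ Cx ∧ |η s u| ≤ Cx) (hXC : ∀ s u, |X s u| ≤ CX)
    (hxeq : ∀ s ∈ Icc 0 T, ∀ u ∈ Ω, HasDerivWithinAt (fun s => x s u)
      (f (x s u) (m (x s u) + η s u) + ∫ v in Ω, J (u - v) * (x s v - x s u)) (Icc 0 T) s)
    (hXeq : ∀ s ∈ Icc 0 T, ∀ u ∈ Ω, HasDerivWithinAt (fun s => X s u)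
      (f (X s u) (m (X s u)) + ∫ v in Ω, J (u - v) * (X s v - X s u)) (Icc 0 T) s)
    (hder : ∀ s ∈ Icc 0 T, ∀ u ∈ Ω,
      |f (x s u) (m (x s u) + η s u) + ∫ v in Ω, J (u - v) * (x s v - x s u)| ≤ Cd ∧
      |f (X s u) (m (X s u)) + ∫ v in Ω, J (u - v) * (X s v - X s u)| ≤ Cd)
    (hc : 2 * (α - L * L') ≤ c) (ha : 0 ≤ a) (hb : 0 ≤ b)
    (hforce : ∀ s ∈ Ioo 0 T,
      L ^ 2 / (α - L * L') * ∫ u in Ω, η s u ^ 2 ≤ a + b * exp (-c * s))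
    (ht : t ∈ Icc 0 T) :
    ∫ u in Ω, (x t u - X t u) ^ 2 ≤ exp (-(α - L * L') * t) * ((∫ u in Ω, (x 0 u - X 0 u) ^ 2) +
      a * exp ((α - L * L') * T) / (α - L * L') + 2 * b / c) := by
  have : IsFiniteMeasure (volume.restrict Ω) := isFiniteMeasure_restrict.2 hΩfin.ne
  set lam := α - L * L'
  have hk := integrable_uncurry_comp_sub (μ := volume.restrict Ω) hJc hJbd
  have hk_symm u v : J (u - v) = J (v - u) := by rw [← hJsym, neg_sub]
  have hxs s : Continuous (x s) := hxc.comp (.prodMk_right s)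
  have hXs s : Continuous (X s) := hXc.comp (.prodMk_right s)
  have hηs s : Continuous (η s) := hηc.comp (.prodMk_right s)
  have hx s := (hxs s).aestronglyMeasurable (μ := volume.restrict Ω)
  have hX s := (hXs s).aestronglyMeasurable (μ := volume.restrict Ω)
  have hΩ := ae_restrict_mem (μ := volume) hΩm
  choose! D hD hD_le using fun s (hs : s ∈ Ioo 0 T) =>
    energy_inequality (ρ := fun u => L ^ 2 / lam * η s u ^ 2) hk hk_symm (fun _ _ => hJnn _)
      hx hX (fun s u => (hxC s u).1) hXC
      (hf.continuous.comp ((hxs s).prodMk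
        ((hm.continuous.comp (hxs s)).add (hηs s)))).aestronglyMeasurable
      (hf.continuous.comp ((hXs s).prodMk (hm.continuous.comp (hXs s)))).aestronglyMeasurable
      (hΩ.mono fun u hu s hs => hxeq s hs u hu) (hΩ.mono fun u hu s hs => hXeq s hs u hu)
      (hΩ.mono fun u hu s hs => (hder s hs u hu).1) (hΩ.mono fun u hu s hs => (hder s hs u hu).2)
      ((integrable_sq_of_abs_le (hηs s).aestronglyMeasurable fun u => (hxC s u).2).const_mul _)
      (ae_of_all _ fun u => reaction_estimate hf hfx hfy hm hm' hlam _ _ _) hs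
  refine le_exp_neg_mul_of_hasDerivAt_le hlam hc ha hb ?_ hD (fun s hs => ?_) ht
  · refine (continuous_integral_sq (w := fun s u => x s u - X s u) (fun s => (hx s).sub (hX s))
      (fun u => (hxc.comp (.prodMk_left u)).sub (hXc.comp (.prodMk_left u))) (C := Cx + CX)
      fun s u => ?_).continuousOn
    linarith [abs_sub (x s u) (X s u), (hxC s u).1, hXC s u]
  · have := hD_le s hs
    rw [integral_const_mul] at this
    linarith [hforce s hs]

end Model

lemma decay_estimate_le {ε δ D₀ D₁ B s ψ ψ₀ : ℝ} (hε : 0 < ε) (hε1 : ε ≤ 1) (hδ : 0 < δ)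
    (hD₁ : 0 ≤ D₁) (hs : 0 ≤ s) (hψ₀ : 0 ≤ ψ₀) (hB : √ψ₀ ≤ B)
    (hψ : ψ ≤ ε / δ * (ε / (2 * δ) * D₀ ^ 2 + D₁) * (1 - exp (-s * δ / ε)) +
      exp (-s * δ / ε) * ψ₀) :
    ψ ≤ ε * ((D₀ ^ 2 / (2 * δ) + D₁) / δ) + B ^ 2 * exp (-(δ / ε) * s) := by
  have he : exp (-s * δ / ε) ≤ 1 :=
    exp_le_one_iff.2 (by rw [neg_mul, neg_div]; exact neg_nonpos.2 (by positivity))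
  have hψ₀B : ψ₀ ≤ B ^ 2 := by
    rw [← sq_sqrt hψ₀]; exact pow_le_pow_left₀ (sqrt_nonneg _) hB 2
  have h1 : ε / δ * (ε / (2 * δ) * D₀ ^ 2 + D₁) * (1 - exp (-s * δ / ε)) ≤
      ε * ((D₀ ^ 2 / (2 * δ) + D₁) / δ) := by
    calc ε / δ * (ε / (2 * δ) * D₀ ^ 2 + D₁) * (1 - exp (-s * δ / ε))
        ≤ ε / δ * (ε / (2 * δ) * D₀ ^ 2 + D₁) * 1 := by gcongr; linarith [exp_pos (-s * δ / ε)]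
      _ ≤ ε / δ * (1 / (2 * δ) * D₀ ^ 2 + D₁) * 1 := by gcongr
      _ = ε * ((D₀ ^ 2 / (2 * δ) + D₁) / δ) := by ring
  rw [show -(δ / ε) * s = -s * δ / ε by ring]
  linarith [mul_le_mul_of_nonneg_left hψ₀B (exp_pos (-s * δ / ε)).le]

theorem stmt9_general (n : ℕ) (Ω : Set (Fin n → ℝ)) (hΩm : MeasurableSet Ω)
    (hΩfin : volume Ω < ⊤)
    (J : (Fin n → ℝ) → ℝ) (hJc : Continuous J) (CJ : ℝ) (hJbd : ∀ z, |J z| ≤ CJ)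
    (hJnn : ∀ z, 0 ≤ J z) (hJsym : ∀ z, J (-z) = J z)
    (α β γ M N δ T D₀ D₁ : ℝ) (hβ : 0 < β)
    (hN : 0 < N) (hδ : 0 < δ) (hD₁ : 0 < D₁)
    (f : ℝ → ℝ → ℝ) (hf : ContDiff ℝ 1 (fun p : ℝ × ℝ => f p.1 p.2))
    (hfx : ∀ a b : ℝ, deriv (fun s => f s b) a ≤ -α)
    (hfy : ∀ a b : ℝ, 0 ≤ deriv (fun s => f a s) b ∧ deriv (fun s => f a s) b ≤ β * N)
    (m : ℝ → ℝ) (hmC : ContDiff ℝ 1 m)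
    (hm' : ∀ a : ℝ, 0 ≤ deriv m a ∧ deriv m a ≤ γ * M / δ)
    -- the family of solutions x^ε, η^ε and the limit solution X
    (xe ηe : ℝ → ℝ → (Fin n → ℝ) → ℝ) (X : ℝ → (Fin n → ℝ) → ℝ)
    (hXc : Continuous (fun p : ℝ × (Fin n → ℝ) => X p.1 p.2))
    (hXb : ∃ C : ℝ, ∀ t u, |X t u| ≤ C)
    (hXeq : ∀ t ∈ Set.Icc (0 : ℝ) T, ∀ u ∈ Ω,
      HasDerivWithinAt (fun s => X s u)
        (f (X t u) (m (X t u)) + ∫ v in Ω, J (u - v) * (X t v - X t u))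
        (Set.Icc 0 T) t)
    (hxc : ∀ ε > (0 : ℝ), Continuous (fun p : ℝ × (Fin n → ℝ) => xe ε p.1 p.2))
    (hηc : ∀ ε > (0 : ℝ), Continuous (fun p : ℝ × (Fin n → ℝ) => ηe ε p.1 p.2))
    (hxb : ∀ ε > (0 : ℝ), ∃ C : ℝ, ∀ t u, |xe ε t u| ≤ C ∧ |ηe ε t u| ≤ C)
    (hxeq : ∀ ε > (0 : ℝ), ∀ t ∈ Set.Icc (0 : ℝ) T, ∀ u ∈ Ω,
      HasDerivWithinAt (fun s => xe ε s u)
        (f (xe ε t u) (m (xe ε t u) + ηe ε t u) +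
          ∫ v in Ω, J (u - v) * (xe ε t v - xe ε t u))
        (Set.Icc 0 T) t)
    -- bounded time-derivatives
    (hder : ∀ ε > (0 : ℝ), ∃ Cd : ℝ, ∀ t ∈ Set.Icc (0 : ℝ) T, ∀ u ∈ Ω,
      |f (xe ε t u) (m (xe ε t u) + ηe ε t u) +
        ∫ v in Ω, J (u - v) * (xe ε t v - xe ε t u)| ≤ Cd ∧
      |f (X t u) (m (X t u)) + ∫ v in Ω, J (u - v) * (X t v - X t u)| ≤ Cd)
    -- the decay estimate for η^ε
    (hηdec : ∀ ε > (0 : ℝ), ∀ t ∈ Set.Icc (0 : ℝ) T,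
      (∫ u in Ω, (ηe ε t u) ^ 2) ≤
        ε / δ * (ε / (2 * δ) * D₀ ^ 2 + D₁) * (1 - Real.exp (-t * δ / ε)) +
          Real.exp (-t * δ / ε) * ∫ u in Ω, (ηe ε 0 u) ^ 2)
    -- ‖η^ε(0)‖_{L²} uniformly bounded in ε
    (B : ℝ) (hB : ∀ ε > (0 : ℝ), Real.sqrt (∫ u in Ω, (ηe ε 0 u) ^ 2) ≤ B)
    -- the additional assumption of Corollary 4.3
    (hadd : 0 < α / (β * N) - γ * M / δ) :
    ∃ ε₀ m₀ M₂ : ℝ, 0 < ε₀ ∧ 0 < m₀ ∧ 0 < M₂ ∧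
      ∀ ε : ℝ, 0 < ε → ε < ε₀ → ∀ t ∈ Set.Icc (0 : ℝ) T,
        (∫ u in Ω, (xe ε t u - X t u) ^ 2) ≤
          Real.exp (-m₀ * t) * ((∫ u in Ω, (xe ε 0 u - X 0 u) ^ 2) + ε * M₂) := by
  obtain ⟨CX, hCX⟩ := hXb
  have hlam : 0 < α - β * N * (γ * M / δ) := by
    have := (lt_div_iff₀ (mul_pos hβ hN)).1 (sub_pos.1 hadd)
    linarith
  set lam := α - β * N * (γ * M / δ)
  set K := (β * N) ^ 2 / lam
  set A := (D₀ ^ 2 / (2 * δ) + D₁) / δ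
  refine ⟨min 1 (δ / (2 * lam)), lam, exp (lam * T) * K * A / lam + 2 * K * B ^ 2 / δ,
    by positivity, hlam, by positivity, fun ε hε hεlt t ht => ?_⟩
  have hc : 2 * lam ≤ δ / ε := by
    have := (lt_div_iff₀ (by positivity)).1 (hεlt.trans_le (min_le_right _ _))
    rw [le_div_iff₀ hε]; linarith
  have hforce : ∀ s ∈ Ioo 0 T,
      K * ∫ u in Ω, ηe ε s u ^ 2 ≤ K * (ε * A) + K * B ^ 2 * exp (-(δ / ε) * s) := fun s hs => by
    have := decay_estimate_le hε (hεlt.le.trans (min_le_left _ _)) hδ hD₁.le hs.1.le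
      (integral_nonneg fun u => sq_nonneg _) (hB ε hε) (hηdec ε hε s (Ioo_subset_Icc_self hs))
    linarith [mul_le_mul_of_nonneg_left this (by positivity : (0 : ℝ) ≤ K)]
  obtain ⟨Cx, hCx⟩ := hxb ε hε
  obtain ⟨Cd, hCd⟩ := hder ε hε
  refine (integral_sq_sub_le hΩm hΩfin hJc hJbd hJnn hJsym hf hfx hfy hmC hm' hlam (hxc ε hε)
    (hηc ε hε) hXc hCx hCX (hxeq ε hε) hXeq hCd hc (by positivity) (by positivity) hforce
    ht).trans_eq ?_
  rw [add_assoc]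
  congr 2
  show K * (ε * A) * exp (lam * T) / lam + 2 * (K * B ^ 2) / (δ / ε) = _
  clear_value lam K A
  field_simp

/-- conditional form of Corollary 4.3: under the same setting and hypotheses
as the conditional form of Theorem 4.1, with the additional assumption
α/(βN) - γM/δ > 0, there are ε₀, m₀, M₂ > 0 such that for all ε ∈ (0,ε₀) and t ∈ [0,T],
‖x^ε(t) - X(t)‖²_{L²} ≤ e^{-m₀ t}(‖x^ε(0) - X(0)‖²_{L²} + ε M₂). -/
theorem stmt9 (n : ℕ) (Ω : Set (Fin n → ℝ)) (hΩm : MeasurableSet Ω)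
    (hΩb : Bornology.IsBounded Ω) (hΩpos : 0 < volume Ω) (hΩfin : volume Ω < ⊤)
    (J : (Fin n → ℝ) → ℝ) (hJc : Continuous J) (CJ : ℝ) (hJbd : ∀ z, |J z| ≤ CJ)
    (hJnn : ∀ z, 0 ≤ J z) (hJsym : ∀ z, J (-z) = J z)
    (hJint : Integrable J) (hJ1 : ∫ z, J z = 1)
    (α β γ M N δ T D₀ D₁ : ℝ) (hα : 0 < α) (hβ : 0 < β) (hγ : 0 < γ)
    (hM : 0 < M) (hN : 0 < N) (hδ : 0 < δ) (hT : 0 < T) (hD₀ : 0 < D₀) (hD₁ : 0 < D₁)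
    (f : ℝ → ℝ → ℝ) (hf : ContDiff ℝ 1 (fun p : ℝ × ℝ => f p.1 p.2))
    (hfx : ∀ a b : ℝ, deriv (fun s => f s b) a ≤ -α)
    (hfy : ∀ a b : ℝ, 0 ≤ deriv (fun s => f a s) b ∧ deriv (fun s => f a s) b ≤ β * N)
    (m : ℝ → ℝ) (hmC : ContDiff ℝ 1 m)
    (hm' : ∀ a : ℝ, 0 ≤ deriv m a ∧ deriv m a ≤ γ * M / δ)
    -- the family of solutions x^ε, η^ε and the limit solution X
    (xe ηe : ℝ → ℝ → (Fin n → ℝ) → ℝ) (X : ℝ → (Fin n → ℝ) → ℝ)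
    (hXc : Continuous (fun p : ℝ × (Fin n → ℝ) => X p.1 p.2))
    (hXb : ∃ C : ℝ, ∀ t u, |X t u| ≤ C)
    (hXeq : ∀ t ∈ Set.Icc (0 : ℝ) T, ∀ u ∈ Ω,
      HasDerivWithinAt (fun s => X s u)
        (f (X t u) (m (X t u)) + ∫ v in Ω, J (u - v) * (X t v - X t u))
        (Set.Icc 0 T) t)
    (hxc : ∀ ε > (0 : ℝ), Continuous (fun p : ℝ × (Fin n → ℝ) => xe ε p.1 p.2))
    (hηc : ∀ ε > (0 : ℝ), Continuous (fun p : ℝ × (Fin n → ℝ) => ηe ε p.1 p.2))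
    (hxb : ∀ ε > (0 : ℝ), ∃ C : ℝ, ∀ t u, |xe ε t u| ≤ C ∧ |ηe ε t u| ≤ C)
    (hxeq : ∀ ε > (0 : ℝ), ∀ t ∈ Set.Icc (0 : ℝ) T, ∀ u ∈ Ω,
      HasDerivWithinAt (fun s => xe ε s u)
        (f (xe ε t u) (m (xe ε t u) + ηe ε t u) +
          ∫ v in Ω, J (u - v) * (xe ε t v - xe ε t u))
        (Set.Icc 0 T) t)
    -- bounded time-derivatives
    (hder : ∀ ε > (0 : ℝ), ∃ Cd : ℝ, ∀ t ∈ Set.Icc (0 : ℝ) T, ∀ u ∈ Ω,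
      |f (xe ε t u) (m (xe ε t u) + ηe ε t u) +
        ∫ v in Ω, J (u - v) * (xe ε t v - xe ε t u)| ≤ Cd ∧
      |f (X t u) (m (X t u)) + ∫ v in Ω, J (u - v) * (X t v - X t u)| ≤ Cd)
    -- the decay estimate for η^ε
    (hηdec : ∀ ε > (0 : ℝ), ∀ t ∈ Set.Icc (0 : ℝ) T,
      (∫ u in Ω, (ηe ε t u) ^ 2) ≤
        ε / δ * (ε / (2 * δ) * D₀ ^ 2 + D₁) * (1 - Real.exp (-t * δ / ε)) +
          Real.exp (-t * δ / ε) * ∫ u in Ω, (ηe ε 0 u) ^ 2)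
    -- ‖η^ε(0)‖_{L²} uniformly bounded in ε
    (B : ℝ) (hB : ∀ ε > (0 : ℝ), Real.sqrt (∫ u in Ω, (ηe ε 0 u) ^ 2) ≤ B)
    -- the additional assumption of Corollary 4.3
    (hadd : 0 < α / (β * N) - γ * M / δ) :
    ∃ ε₀ m₀ M₂ : ℝ, 0 < ε₀ ∧ 0 < m₀ ∧ 0 < M₂ ∧
      ∀ ε : ℝ, 0 < ε → ε < ε₀ → ∀ t ∈ Set.Icc (0 : ℝ) T,
        (∫ u in Ω, (xe ε t u - X t u) ^ 2) ≤
          Real.exp (-m₀ * t) * ((∫ u in Ω, (xe ε 0 u - X 0 u) ^ 2) + ε * M₂) :=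
  stmt9_general n Ω hΩm hΩfin J hJc CJ hJbd hJnn hJsym α β γ M N δ T D₀ D₁ hβ hN hδ hD₁ f hf hfx hfy
    m hmC hm' xe ηe X hXc hXb hXeq hxc hηc hxb hxeq hder hηdec B hB hadd
end

section
/- Let α_h, β_h, α_v, β_v > 0 satisfy α_h α_v > β_h β_v, let m(z) = α_v z/(α_v z + β_v) and F(z) = α_h (1−z) m(z) − β_h z. Then z* := (α_h α_v − β_h β_v)/(α_v (α_h + β_h)) satisfies 0 < z* < 1, F(z*) = 0, and z* is the unique positive real z with F(z) = 0. -/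
open Real

/-- Under (H_C) : α_h α_v > β_h β_v, the value
z* = (α_h α_v - β_h β_v)/(α_v(α_h + β_h)) satisfies 0 < z* < 1, F(z*) = 0 for
F(z) = α_h(1-z) m(z) - β_h z with m(z) = α_v z/(α_v z + β_v), and z* is the unique
positive zero of F. -/
theorem stmt12 (αh βh αv βv : ℝ) (hαh : 0 < αh) (hβh : 0 < βh) (hαv : 0 < αv)
    (hβv : 0 < βv) (hC : βh * βv < αh * αv) :
    0 < (αh * αv - βh * βv) / (αv * (αh + βh)) ∧
    (αh * αv - βh * βv) / (αv * (αh + βh)) < 1 ∧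
    (αh * (1 - (αh * αv - βh * βv) / (αv * (αh + βh))) *
        (αv * ((αh * αv - βh * βv) / (αv * (αh + βh))) /
          (αv * ((αh * αv - βh * βv) / (αv * (αh + βh))) + βv)) -
      βh * ((αh * αv - βh * βv) / (αv * (αh + βh))) = 0) ∧
    (∀ z : ℝ, 0 < z → αh * (1 - z) * (αv * z / (αv * z + βv)) - βh * z = 0 →
      z = (αh * αv - βh * βv) / (αv * (αh + βh))) := by
  have hden : 0 < αv * (αh + βh) := by positivity
  set z := (αh * αv - βh * βv) / (αv * (αh + βh)) with hzdef
  have hz0 : 0 < z := div_pos (by linarith) hden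
  have hz1 : z < 1 := by
    rw [hzdef, div_lt_one hden]; nlinarith
  have hd : αv * z + βv ≠ 0 := by positivity
  refine ⟨hz0, hz1, ?_, ?_⟩
  · have hzeq : z * (αv * (αh + βh)) = αh * αv - βh * βv := by
      rw [hzdef, div_mul_cancel₀]; exact ne_of_gt hden
    clear_value z
    rw [sub_eq_zero]
    field_simp
    nlinarith [hzeq]
  · intro w hw hFw
    have hdw : αv * w + βv ≠ 0 := by positivity
    have h1 : αh * (1 - w) * (αv * w) - βh * w * (αv * w + βv) = 0 := by
      have := hFw
      field_simp at this
      nlinarith [this]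
    have h2 : w * (αv * (αh + βh)) = αh * αv - βh * βv := by nlinarith [h1, hw]
    rw [hzdef, eq_div_iff (ne_of_gt hden)]
    exact h2
end

section
/- Let α_h, β_h, α_v, β_v > 0 satisfy α_h α_v > β_h β_v, let m(z) = α_v z/(α_v z + β_v), F(z) = α_h(1−z)m(z) − β_h z, and z* = (α_h α_v − β_h β_v)/(α_v(α_h + β_h)). Then F(z) > 0 for every z ∈ (0, z*) and F(z) < 0 for every z with z > z*; in particular F < 0 on (z*, 1]. -/
open Real

lemma stmt13_key (αh βh αv βv z : ℝ) (hz : 0 < z) (hαv : 0 < αv) (hβv : 0 < βv) :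
    αh * (1 - z) * (αv * z / (αv * z + βv)) - βh * z
      = z * (αh * αv - βh * βv - αv * (αh + βh) * z) / (αv * z + βv) := by
  have hD : αv * z + βv > 0 := by positivity
  field_simp
  ring

/-- Under (H_C) : α_h α_v > β_h β_v, with m(z) = α_v z/(α_v z + β_v),
F(z) = α_h(1-z)m(z) - β_h z and z* = (α_h α_v - β_h β_v)/(α_v(α_h + β_h)),
F is positive on (0, z*) and negative on (z*, ∞); in particular F < 0 on (z*, 1]. -/
theorem stmt13 (αh βh αv βv : ℝ) (hαh : 0 < αh) (hβh : 0 < βh) (hαv : 0 < αv)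
    (hβv : 0 < βv) (hC : βh * βv < αh * αv) :
    (∀ z : ℝ, z ∈ Set.Ioo (0 : ℝ) ((αh * αv - βh * βv) / (αv * (αh + βh))) →
      0 < αh * (1 - z) * (αv * z / (αv * z + βv)) - βh * z) ∧
    (∀ z : ℝ, (αh * αv - βh * βv) / (αv * (αh + βh)) < z →
      αh * (1 - z) * (αv * z / (αv * z + βv)) - βh * z < 0) ∧
    (∀ z : ℝ, z ∈ Set.Ioc ((αh * αv - βh * βv) / (αv * (αh + βh))) 1 →
      αh * (1 - z) * (αv * z / (αv * z + βv)) - βh * z < 0) := by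
  have hden : 0 < αv * (αh + βh) := by positivity
  have hzs : 0 < (αh * αv - βh * βv) / (αv * (αh + βh)) := by
    apply div_pos (by linarith) hden
  have hneg : ∀ z : ℝ, (αh * αv - βh * βv) / (αv * (αh + βh)) < z →
      αh * (1 - z) * (αv * z / (αv * z + βv)) - βh * z < 0 := by
    intro z hz
    have hz0 : 0 < z := lt_trans hzs hz
    rw [stmt13_key αh βh αv βv z hz0 hαv hβv]
    have hD : 0 < αv * z + βv := by positivity
    apply div_neg_of_neg_of_pos _ hD
    have h1 : αh * αv - βh * βv < αv * (αh + βh) * z := by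
      rw [div_lt_iff₀ hden] at hz; linarith [hz]
    nlinarith
  refine ⟨?_, hneg, fun z hz => hneg z hz.1⟩
  intro z ⟨hz0, hz1⟩
  rw [stmt13_key αh βh αv βv z hz0 hαv hβv]
  have hD : 0 < αv * z + βv := by positivity
  apply div_pos _ hD
  have h1 : αv * (αh + βh) * z < αh * αv - βh * βv := by
    rw [lt_div_iff₀ hden] at hz1; linarith
  nlinarith
end

section
/- (Spatially homogeneous case of Proposition 3.1(b).) Let α_h, β_h, α_v, β_v > 0 satisfy α_h α_v > β_h β_v, let m(z) = α_v z/(α_v z + β_v), F(z) = α_h(1−z)m(z) − β_h z, and z* = (α_h α_v − β_h β_v)/(α_v(α_h + β_h)). Let z : [0,∞) → ℝ be differentiable with z′(t) = F(z(t)) for all t ≥ 0 and z(0) ∈ (0,1]. Then z(t) ∈ (0,1] for all t ≥ 0 and z(t) → z* as t → ∞. -/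
/-!
With `z*` the equilibrium, `F(x) = α_v (α_h + β_h) x (z* - x) / (α_v x + β_v)`. Hence `F > 0` on
`(0, z*)` and `F(1) < 0`, so by a barrier argument `[δ, 1]` is forward invariant for every
`δ ∈ (0, min (z 0) z*)`. On `[δ, 1]` one has `(x - z*) F(x) ≤ -k (x - z*)²` with `k > 0`, so the
Lyapunov function `(z - z*)²` decays like `exp (-2 k t)`.
-/

open Real Filter Set Topology

lemma le_mul_exp_of_hasDerivWithinAt_Ici {u u' : ℝ → ℝ} {c : ℝ}
    (hu : ∀ t ∈ Ici (0 : ℝ), HasDerivWithinAt u (u' t) (Ici 0) t)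
    (hu' : ∀ t ∈ Ici (0 : ℝ), u' t ≤ -c * u t) :
    ∀ t ∈ Ici (0 : ℝ), u t ≤ u 0 * exp (-(c * t)) := by
  have hW : ∀ t ∈ Ici (0 : ℝ), HasDerivWithinAt (fun s => u s * exp (c * s))
      ((u' t + c * u t) * exp (c * t)) (Ici 0) t := fun t ht => by
    refine ((hu t ht).fun_mul ((hasDerivAt_id t).const_mul c).exp.hasDerivWithinAt).congr_deriv ?_
    simp only [id, mul_one]
    ring
  have hanti : AntitoneOn (fun s => u s * exp (c * s)) (Ici 0) := by
    refine antitoneOn_of_hasDerivWithinAt_nonpos (convex_Ici 0)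
      (f' := fun t => (u' t + c * u t) * exp (c * t))
      (fun t ht => (hW t ht).continuousWithinAt) (fun t ht => ?_) (fun t ht => ?_)
    · rw [interior_Ici] at ht ⊢
      exact (hW t (mem_Ici_of_Ioi ht)).mono Ioi_subset_Ici_self
    · rw [interior_Ici] at ht
      exact mul_nonpos_of_nonpos_of_nonneg (by linarith [hu' t (mem_Ici_of_Ioi ht)]) (exp_pos _).le
  intro t ht
  have hW0 := hanti self_mem_Ici ht ht
  simp only [mul_zero, exp_zero, mul_one] at hW0
  calc u t = u t * exp (c * t) * exp (-(c * t)) := by rw [mul_assoc, ← exp_add]; simp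
    _ ≤ u 0 * exp (-(c * t)) := by gcongr

section AutonomousODE

variable {f z : ℝ → ℝ}

lemma image_le_of_hasDerivWithinAt_Ici_of_neg {b : ℝ}
    (hz : ∀ t ∈ Ici (0 : ℝ), HasDerivWithinAt z (f (z t)) (Ici 0) t)
    (hb : f b < 0) (h0 : z 0 ≤ b) : ∀ t ∈ Ici (0 : ℝ), z t ≤ b := by
  intro t ht
  refine image_le_of_deriv_right_lt_deriv_boundary (B := fun _ => b) (B' := fun _ => 0)
    (fun s hs => (hz s hs.1).continuousWithinAt.mono Icc_subset_Ici_self)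
    (fun s hs => (hz s hs.1).mono (Ici_subset_Ici.2 hs.1)) h0
    (fun _ => hasDerivAt_const _ _) (fun s _ hs => ?_) ⟨ht, le_rfl⟩
  rwa [hs]

lemma le_image_of_hasDerivWithinAt_Ici_of_pos {a : ℝ}
    (hz : ∀ t ∈ Ici (0 : ℝ), HasDerivWithinAt z (f (z t)) (Ici 0) t)
    (ha : 0 < f a) (h0 : a ≤ z 0) : ∀ t ∈ Ici (0 : ℝ), a ≤ z t := by
  intro t ht
  refine image_le_of_deriv_right_lt_deriv_boundary' (f := fun _ => a) (f' := fun _ => 0)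
    continuousOn_const (fun _ _ => hasDerivWithinAt_const _ _ _) h0
    (fun s hs => (hz s hs.1).continuousWithinAt.mono Icc_subset_Ici_self)
    (fun s hs => (hz s hs.1).mono (Ici_subset_Ici.2 hs.1)) (fun s _ hs => ?_) ⟨ht, le_rfl⟩
  rwa [← hs]

lemma tendsto_of_hasDerivWithinAt_Ici_of_sub_mul_le {p k : ℝ} (hk : 0 < k)
    (hz : ∀ t ∈ Ici (0 : ℝ), HasDerivWithinAt z (f (z t)) (Ici 0) t)
    (hf : ∀ t ∈ Ici (0 : ℝ), (z t - p) * f (z t) ≤ -k * (z t - p) ^ 2) :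
    Tendsto z atTop (𝓝 p) := by
  have hdecay := le_mul_exp_of_hasDerivWithinAt_Ici (u := fun t => (z t - p) ^ 2) (c := 2 * k)
    (u' := fun t => 2 * (z t - p) * f (z t))
    (fun t ht => by simpa using ((hz t ht).sub_const p).fun_pow 2)
    (fun t ht => by nlinarith [hf t ht])
  have hexp : Tendsto (fun t => (z 0 - p) ^ 2 * exp (-(2 * k * t))) atTop (𝓝 0) := by
    simpa using (tendsto_exp_atBot.comp (tendsto_neg_atTop_atBot.comp
      (tendsto_id.const_mul_atTop (by positivity : 0 < 2 * k)))).const_mul ((z 0 - p) ^ 2)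
  have hsq : Tendsto (fun t => (z t - p) ^ 2) atTop (𝓝 0) :=
    squeeze_zero' (Eventually.of_forall fun _ => sq_nonneg _)
      (eventually_ge_atTop 0 |>.mono hdecay) hexp
  rw [tendsto_iff_norm_sub_tendsto_zero]
  simpa [sqrt_sq_eq_abs] using hsq.sqrt

end AutonomousODE

namespace HostVector

noncomputable def field (αh βh αv βv x : ℝ) : ℝ :=
  αh * (1 - x) * (αv * x / (αv * x + βv)) - βh * x

noncomputable def equilibrium (αh βh αv βv : ℝ) : ℝ :=
  (αh * αv - βh * βv) / (αv * (αh + βh))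

variable {αh βh αv βv x : ℝ}

lemma field_eq (hA : αv * (αh + βh) ≠ 0) (hx : αv * x + βv ≠ 0) :
    field αh βh αv βv x
      = αv * (αh + βh) * x * (equilibrium αh βh αv βv - x) / (αv * x + βv) := by
  obtain ⟨hαv, hαβ⟩ := mul_ne_zero_iff.1 hA
  rw [mul_comm] at hx
  rw [field, equilibrium]
  field_simp
  ring

lemma equilibrium_pos (hαh : 0 < αh) (hβh : 0 < βh) (hαv : 0 < αv) (hC : βh * βv < αh * αv) :
    0 < equilibrium αh βh αv βv :=
  div_pos (by linarith) (by positivity)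

lemma equilibrium_lt_one (hαh : 0 < αh) (hβh : 0 < βh) (hαv : 0 < αv) (hβv : 0 < βv) :
    equilibrium αh βh αv βv < 1 := by
  rw [equilibrium, div_lt_one (by positivity)]
  nlinarith [mul_pos hβh hβv, mul_pos hαv hβh]

lemma field_pos (hαh : 0 < αh) (hβh : 0 < βh) (hαv : 0 < αv) (hβv : 0 < βv)
    (hx₀ : 0 < x) (hx : x < equilibrium αh βh αv βv) : 0 < field αh βh αv βv x := by
  rw [field_eq (by positivity) (by positivity)]
  have : 0 < equilibrium αh βh αv βv - x := by linarith
  positivity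

lemma field_one_neg (hαh : 0 < αh) (hβh : 0 < βh) (hαv : 0 < αv) (hβv : 0 < βv) :
    field αh βh αv βv 1 < 0 := by
  rw [field_eq (by positivity) (by positivity)]
  have := equilibrium_lt_one hαh hβh hαv hβv
  exact div_neg_of_neg_of_pos (mul_neg_of_pos_of_neg (by positivity) (by linarith)) (by positivity)

lemma sub_mul_field_le (hαh : 0 < αh) (hβh : 0 < βh) (hαv : 0 < αv) (hβv : 0 < βv) {δ : ℝ}
    (hδ : 0 < δ) (hδx : δ ≤ x) (hx : x ≤ 1) :
    (x - equilibrium αh βh αv βv) * field αh βh αv βv x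
      ≤ -(αv * (αh + βh) * δ / (αv + βv)) * (x - equilibrium αh βh αv βv) ^ 2 := by
  have hd : 0 < αv * x + βv := by nlinarith
  have hrate : δ / (αv + βv) ≤ x / (αv * x + βv) := by
    rw [div_le_div_iff₀ (by positivity) hd]
    nlinarith [mul_le_mul_of_nonneg_left hx (mul_nonneg hδ.le hαv.le),
      mul_le_mul_of_nonneg_left hδx hβv.le]
  calc (x - equilibrium αh βh αv βv) * field αh βh αv βv x
      = -(αv * (αh + βh) * (x / (αv * x + βv))) * (x - equilibrium αh βh αv βv) ^ 2 := by
        rw [field_eq (by positivity) hd.ne']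
        ring
    _ ≤ -(αv * (αh + βh) * (δ / (αv + βv))) * (x - equilibrium αh βh αv βv) ^ 2 := by
        gcongr
    _ = _ := by ring

end HostVector

open HostVector in
/-- spatially homogeneous case of Proposition 3.1(b): under (H_C),
every solution of z' = F(z) = α_h(1-z)m(z) - β_h z with z(0) ∈ (0,1] stays in (0,1]
and converges to z* = (α_h α_v - β_h β_v)/(α_v(α_h + β_h)) as t → ∞. -/
theorem stmt14 (αh βh αv βv : ℝ) (hαh : 0 < αh) (hβh : 0 < βh) (hαv : 0 < αv)
    (hβv : 0 < βv) (hC : βh * βv < αh * αv)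
    (z : ℝ → ℝ)
    (hz : ∀ t ∈ Set.Ici (0 : ℝ),
      HasDerivWithinAt z
        (αh * (1 - z t) * (αv * z t / (αv * z t + βv)) - βh * z t) (Set.Ici 0) t)
    (hz0 : z 0 ∈ Set.Ioc (0 : ℝ) 1) :
    (∀ t ∈ Set.Ici (0 : ℝ), z t ∈ Set.Ioc (0 : ℝ) 1) ∧
    Tendsto z atTop (nhds ((αh * αv - βh * βv) / (αv * (αh + βh)))) := by
  replace hz : ∀ t ∈ Ici (0 : ℝ),
      HasDerivWithinAt z (field αh βh αv βv (z t)) (Ici 0) t := hz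
  obtain ⟨δ, hδ, hδz0, hδeq⟩ : ∃ δ, 0 < δ ∧ δ < z 0 ∧ δ < equilibrium αh βh αv βv := by
    obtain ⟨δ, hδ, hδmin⟩ := exists_between (lt_min hz0.1 (equilibrium_pos hαh hβh hαv hC))
    exact ⟨δ, hδ, lt_min_iff.1 hδmin⟩
  have hle_one := image_le_of_hasDerivWithinAt_Ici_of_neg hz (field_one_neg hαh hβh hαv hβv) hz0.2
  have hδ_le := le_image_of_hasDerivWithinAt_Ici_of_pos hz
    (field_pos hαh hβh hαv hβv hδ hδeq) hδz0.le
  refine ⟨fun t ht => ⟨hδ.trans_le (hδ_le t ht), hle_one t ht⟩, ?_⟩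
  exact tendsto_of_hasDerivWithinAt_Ici_of_sub_mul_le (by positivity) hz
    fun t ht => sub_mul_field_le hαh hβh hαv hβv hδ (hδ_le t ht) (hle_one t ht)
end

section
/- (Spatially homogeneous case of Remark 3.2.) Let α_h, β_h, α_v, β_v > 0 satisfy α_h α_v ≤ β_h β_v, let m(z) = α_v z/(α_v z + β_v) and F(z) = α_h(1−z)m(z) − β_h z. Then F(z) < 0 for every z ∈ (0,1], so 0 is the unique zero of F in [0,1]; and every differentiable z : [0,∞) → ℝ with z′(t) = F(z(t)) for all t ≥ 0 and z(0) ∈ [0,1] satisfies z(t) ∈ [0,1] for all t ≥ 0 and z(t) → 0 as t → ∞. -/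
/-!
Clearing the denominator, `F z = z * ((αh αv - βh βv) - (αh + βh) αv z) / (αv z + βv)`, so
`αh αv ≤ βh βv` gives `F z ≤ -c z²` on `[0, 1]` with `c > 0`. The interval `[0, 1]` is invariant:
`F ≤ 0` on `[1, ∞)`, and just below the equilibrium `0` the one-sided Lipschitz bound
`(αh + βh) z ≤ F z` keeps solutions from crossing it. Inside `[0, 1]` the solution is nonincreasing
with `z' ≤ -c z²`, so it cannot stay above any `ε > 0` for longer than `z 0 / (c ε²)`.
-/

open Real Filter Set Topology

theorem image_nonneg_of_deriv_right_ge_mul_near_zero {f f' : ℝ → ℝ} {a b L δ : ℝ}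
    (hf : ContinuousOn f (Icc a b)) (hf' : ∀ x ∈ Ico a b, HasDerivWithinAt f (f' x) (Ici x) x)
    (ha : 0 ≤ f a) (hδ : 0 < δ)
    (bound : ∀ x ∈ Ico a b, -δ < f x → f x < 0 → L * f x ≤ f' x) :
    ∀ ⦃x⦄, x ∈ Icc a b → 0 ≤ f x := by
  intro x hx
  by_contra! hfx
  obtain ⟨η, hη0, hηδ, hηf⟩ : ∃ η, 0 < η ∧ η < δ ∧ η < -f x :=
    ⟨min δ (-f x) / 2, half_pos (lt_min hδ (neg_pos.2 hfx)),
      by linarith [min_le_left δ (-f x)], by linarith [min_le_right δ (-f x)]⟩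
  -- Fence `-f` by `B`: below it `bound` applies, and on it `-f' ≤ |L| B < B'`.
  set B : ℝ → ℝ := fun t => η * exp ((|L| + 1) * (t - b))
  have hB_le : ∀ t ≤ b, B t ≤ η := fun t ht =>
    mul_le_of_le_one_right hη0.le (exp_le_one_iff.2 (by nlinarith [abs_nonneg L]))
  have hB' : ∀ t, HasDerivAt B ((|L| + 1) * B t) t := fun t => by
    simpa [B, mul_comm, mul_left_comm] using
      (((hasDerivAt_id t).sub_const b).const_mul (|L| + 1)).exp.const_mul η
  have hfenced := image_le_of_deriv_right_lt_deriv_boundary' (f := -f) (f' := -f')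
    hf.neg (fun x hx => (hf' x hx).neg) (B := B) (B' := fun t => (|L| + 1) * B t)
    (by simp only [Pi.neg_apply]; linarith [show 0 < B a by positivity])
    (fun t _ => (hB' t).continuousAt.continuousWithinAt)
    (fun t _ => (hB' t).hasDerivWithinAt) ?_ hx
  · simp only [Pi.neg_apply] at hfenced
    linarith [hB_le x hx.2]
  · intro t ht hft
    simp only [Pi.neg_apply] at hft ⊢
    have hBt : 0 < B t := by positivity
    have hfB : f t = -B t := by linarith
    have := bound t ht (by linarith [hB_le t ht.2.le]) (by linarith)
    rw [hfB] at this
    nlinarith [mul_le_mul_of_nonneg_right (le_abs_self L) hBt.le]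

theorem le_sub_mul_of_deriv_right_le {f f' : ℝ → ℝ} {a b k : ℝ}
    (hf : ContinuousOn f (Icc a b)) (hf' : ∀ x ∈ Ico a b, HasDerivWithinAt f (f' x) (Ici x) x)
    (bound : ∀ x ∈ Ico a b, f' x ≤ -k) (hab : a ≤ b) :
    f b ≤ f a - k * (b - a) := by
  refine image_le_of_deriv_right_le_deriv_boundary hf hf' (B := fun t => f a - k * (t - a))
    (B' := fun _ => -k) (by simp) (by fun_prop) (fun t _ => ?_) bound ⟨hab, le_rfl⟩
  simpa using (((hasDerivAt_id t).sub_const a).const_mul k).const_sub (f a) |>.hasDerivWithinAt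

theorem continuousOn_Icc_of_hasDerivWithinAt_Ici {f f' : ℝ → ℝ} {a s b : ℝ}
    (hf : ∀ t ∈ Ici a, HasDerivWithinAt f (f' t) (Ici a) t) (has : a ≤ s) :
    ContinuousOn f (Icc s b) :=
  fun t ht => (hf t (has.trans ht.1)).continuousWithinAt.mono
    (Icc_subset_Ici_self.trans (Ici_subset_Ici.2 has))

theorem hasDerivWithinAt_Ici_of_hasDerivWithinAt_Ici {f f' : ℝ → ℝ} {a s b : ℝ}
    (hf : ∀ t ∈ Ici a, HasDerivWithinAt f (f' t) (Ici a) t) (has : a ≤ s) :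
    ∀ x ∈ Ico s b, HasDerivWithinAt f (f' x) (Ici x) x :=
  fun x hx => (hf x (has.trans hx.1)).mono (Ici_subset_Ici.2 (has.trans hx.1))

theorem tendsto_zero_of_deriv_right_le_neg_sq {z z' : ℝ → ℝ} {c : ℝ} (hc : 0 < c)
    (hz : ∀ t ∈ Ici (0 : ℝ), HasDerivWithinAt z (z' t) (Ici 0) t)
    (hnonneg : ∀ t ∈ Ici (0 : ℝ), 0 ≤ z t) (hz' : ∀ t ∈ Ici (0 : ℝ), z' t ≤ -c * z t ^ 2) :
    Tendsto z atTop (𝓝 0) := by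
  have hdecay : ∀ {s t k : ℝ}, 0 ≤ s → s ≤ t → (∀ x ∈ Ico s t, z' x ≤ -k) →
      z t ≤ z s - k * (t - s) := fun hs hst bound =>
    le_sub_mul_of_deriv_right_le (continuousOn_Icc_of_hasDerivWithinAt_Ici hz hs)
      (hasDerivWithinAt_Ici_of_hasDerivWithinAt_Ici hz hs) bound hst
  have hanti : ∀ {s t}, 0 ≤ s → s ≤ t → z t ≤ z s := fun hs hst => by
    simpa using hdecay (k := 0) hs hst fun x hx =>
      by nlinarith [hz' x (hs.trans hx.1), sq_nonneg (z x)]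
  refine tendsto_order.2 ⟨fun ε hε => eventually_atTop.2 ⟨0, fun t ht =>
    hε.trans_le (hnonneg t ht)⟩, fun ε hε => ?_⟩
  set T := z 0 / (c * ε ^ 2)
  have hT : 0 ≤ T := div_nonneg (hnonneg 0 self_mem_Ici) (by positivity)
  have hzT : z T < ε := by
    by_contra! hεT
    have := hdecay (k := c * ε ^ 2) le_rfl hT fun x hx => by
      have hεx : ε ≤ z x := hεT.trans (hanti hx.1 hx.2.le)
      nlinarith [hz' x hx.1, pow_le_pow_left₀ hε.le hεx 2]
    have : c * ε ^ 2 * (T - 0) = z 0 := by rw [sub_zero]; exact mul_div_cancel₀ _ (by positivity)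
    linarith
  exact eventually_atTop.2 ⟨T, fun t ht => (hanti hT ht).trans_lt hzT⟩

noncomputable section

namespace HostVector

def m (αv βv z : ℝ) : ℝ := αv * z / (αv * z + βv)

def F (αh βh αv βv z : ℝ) : ℝ := αh * (1 - z) * m αv βv z - βh * z

variable {αh βh αv βv z : ℝ}

theorem F_eq (hD : αv * z + βv ≠ 0) :
    F αh βh αv βv z = z * (αh * αv - βh * βv - (αh + βh) * αv * z) / (αv * z + βv) := by
  unfold F m
  rw [eq_div_iff hD]
  linear_combination αh * (1 - z) * div_mul_cancel₀ (αv * z) hD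

theorem F_nonpos (hαh : 0 < αh) (hβh : 0 < βh) (hαv : 0 < αv) (hβv : 0 < βv)
    (hC : αh * αv ≤ βh * βv) (hz : 0 ≤ z) : F αh βh αv βv z ≤ 0 := by
  rw [F_eq (by positivity : αv * z + βv ≠ 0)]
  exact div_nonpos_of_nonpos_of_nonneg
    (by nlinarith [mul_nonneg hz (sub_nonneg.2 hC),
      mul_nonneg (mul_nonneg hz hz) (by positivity : (0 : ℝ) ≤ (αh + βh) * αv)])
    (by positivity)

theorem F_le_neg_mul_sq (hαh : 0 < αh) (hβh : 0 < βh) (hαv : 0 < αv) (hβv : 0 < βv)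
    (hC : αh * αv ≤ βh * βv) (hz0 : 0 ≤ z) (hz1 : z ≤ 1) :
    F αh βh αv βv z ≤ -((αh + βh) * αv / (αv + βv)) * z ^ 2 := by
  have hD : 0 < αv * z + βv := by positivity
  calc F αh βh αv βv z
      = z * (αh * αv - βh * βv - (αh + βh) * αv * z) / (αv * z + βv) := F_eq hD.ne'
    _ ≤ -((αh + βh) * αv * z ^ 2) / (αv * z + βv) :=
        div_le_div_of_nonneg_right (by nlinarith [mul_nonneg hz0 (sub_nonneg.2 hC)]) hD.le
    _ ≤ -((αh + βh) * αv * z ^ 2) / (αv + βv) := by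
        rw [neg_div, neg_div, neg_le_neg_iff]
        exact div_le_div_of_nonneg_left (by positivity) hD (by nlinarith)
    _ = -((αh + βh) * αv / (αv + βv)) * z ^ 2 := by ring

theorem F_neg (hαh : 0 < αh) (hβh : 0 < βh) (hαv : 0 < αv) (hβv : 0 < βv)
    (hC : αh * αv ≤ βh * βv) (hz0 : 0 < z) (hz1 : z ≤ 1) : F αh βh αv βv z < 0 :=
  (F_le_neg_mul_sq hαh hβh hαv hβv hC hz0.le hz1).trans_lt
    (by have : 0 < (αh + βh) * αv / (αv + βv) := by positivity
        nlinarith [pow_pos hz0 2])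

theorem mul_le_F_of_nonpos (hαh : 0 < αh) (hβh : 0 < βh) (hβv : 0 < βv)
    (hC : αh * αv ≤ βh * βv) (hz : -βv < 2 * αv * z) (hz0 : z ≤ 0) :
    (αh + βh) * z ≤ F αh βh αv βv z := by
  have hD : 0 < αv * z + βv := by linarith
  rw [F_eq hD.ne', le_div_iff₀ hD]
  nlinarith [mul_nonneg (neg_nonneg.2 hz0) (by positivity : (0 : ℝ) ≤ αh + βh),
    mul_nonneg (neg_nonneg.2 hz0) (sub_nonneg.2 hC)]

theorem mem_Icc_of_hasDerivWithinAt (hαh : 0 < αh) (hβh : 0 < βh) (hαv : 0 < αv)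
    (hβv : 0 < βv) (hC : αh * αv ≤ βh * βv) {z : ℝ → ℝ}
    (hz : ∀ t ∈ Ici (0 : ℝ), HasDerivWithinAt z (F αh βh αv βv (z t)) (Ici 0) t)
    (hz0 : z 0 ∈ Icc 0 1) : ∀ t ∈ Ici (0 : ℝ), z t ∈ Icc 0 1 := by
  intro t ht
  have hcont : ContinuousOn z (Icc 0 t) := continuousOn_Icc_of_hasDerivWithinAt_Ici hz le_rfl
  have hderiv := hasDerivWithinAt_Ici_of_hasDerivWithinAt_Ici hz le_rfl (b := t)
  constructor
  · refine image_nonneg_of_deriv_right_ge_mul_near_zero (L := αh + βh) (δ := βv / (2 * αv))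
      hcont hderiv hz0.1 (by positivity)
      (fun x _ hδ hneg => mul_le_F_of_nonpos hαh hβh hβv hC ?_ hneg.le) ⟨ht, le_rfl⟩
    rw [neg_lt, lt_div_iff₀ (by positivity)] at hδ
    linarith
  · have h := image_nonneg_of_deriv_right_ge_mul_near_zero (f := fun s => 1 - z s) (L := 0)
      (δ := 1) (continuousOn_const.sub hcont) (fun x hx => (hderiv x hx).const_sub 1)
      (sub_nonneg.2 hz0.2) one_pos
      (fun x _ _ hneg => by simpa using F_nonpos hαh hβh hαv hβv hC (z := z x) (by linarith))
      ⟨ht, le_rfl⟩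
    linarith

end HostVector

end

open HostVector in
/-- spatially homogeneous case of Remark 3.2: if α_h α_v ≤ β_h β_v then
F(z) = α_h(1-z)m(z) - β_h z is negative on (0,1], 0 is the unique zero of F in [0,1],
and every solution of z' = F(z) with z(0) ∈ [0,1] stays in [0,1] and tends to 0. -/
theorem stmt15 (αh βh αv βv : ℝ) (hαh : 0 < αh) (hβh : 0 < βh) (hαv : 0 < αv)
    (hβv : 0 < βv) (hC : αh * αv ≤ βh * βv) :
    (∀ z ∈ Set.Ioc (0 : ℝ) 1,
      αh * (1 - z) * (αv * z / (αv * z + βv)) - βh * z < 0) ∧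
    (∀ z ∈ Set.Icc (0 : ℝ) 1,
      αh * (1 - z) * (αv * z / (αv * z + βv)) - βh * z = 0 → z = 0) ∧
    (∀ z : ℝ → ℝ,
      (∀ t ∈ Set.Ici (0 : ℝ),
        HasDerivWithinAt z
          (αh * (1 - z t) * (αv * z t / (αv * z t + βv)) - βh * z t) (Set.Ici 0) t) →
      z 0 ∈ Set.Icc (0 : ℝ) 1 →
      (∀ t ∈ Set.Ici (0 : ℝ), z t ∈ Set.Icc (0 : ℝ) 1) ∧
        Tendsto z atTop (nhds 0)) := by
  have hF_neg : ∀ z ∈ Ioc (0 : ℝ) 1, F αh βh αv βv z < 0 := fun z hz =>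
    F_neg hαh hβh hαv hβv hC hz.1 hz.2
  refine ⟨hF_neg, fun z hz hFz => ?_, fun z hz hz0 => ?_⟩
  · exact by_contra fun hne => (hF_neg z ⟨hz.1.lt_of_ne' hne, hz.2⟩).ne hFz
  · have hmem := mem_Icc_of_hasDerivWithinAt hαh hβh hαv hβv hC hz hz0
    refine ⟨hmem, tendsto_zero_of_deriv_right_le_neg_sq
      (c := (αh + βh) * αv / (αv + βv)) (by positivity) hz
      (fun t ht => (hmem t ht).1) fun t ht => ?_⟩
    exact F_le_neg_mul_sq hαh hβh hαv hβv hC (hmem t ht).1 (hmem t ht).2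
end

section
/- Let α_h, β_h, α_v, β_v, ε > 0 and consider the planar ODE system i′(t) = α_h(1−i(t))j(t) − β_h i(t), j′(t) = (α_v/ε)(1−j(t))i(t) − (β_v/ε) j(t). If (i, j) : [0,∞) → ℝ² is a differentiable solution with (i(0), j(0)) ∈ [0,1]², then (i(t), j(t)) ∈ [0,1]² for all t ≥ 0. -/
open Real

private lemma comp_aux16 {h : ℝ → ℝ} {H x fx r : ℝ} (hd : HasDerivWithinAt h H (Set.Ici 0) x)
    (hx : 0 ≤ x) (hle : h x ≤ fx) (hr : h x = fx → H < r) :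
    ∀ᶠ z in nhdsWithin x (Set.Ioi x), h z - fx < r * (z - x) := by
  rcases eq_or_lt_of_le hle with heq | hlt
  · have hH := hr heq
    have hsub : nhdsWithin x (Set.Ioi x) ≤ nhdsWithin x (Set.Ici 0 \ {x}) :=
      nhdsWithin_mono x (fun z hz => ⟨le_trans hx (le_of_lt hz), ne_of_gt hz⟩)
    have ht := (hasDerivWithinAt_iff_tendsto_slope.mp hd).mono_left hsub
    have h2 := ht.eventually_lt_const hH
    filter_upwards [h2, self_mem_nhdsWithin] with z hz hz'
    have hzx : 0 < z - x := sub_pos.mpr hz'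
    rw [slope_def_field, div_lt_iff₀ hzx] at hz
    rw [← heq]
    linarith
  · have hsub' : nhdsWithin x (Set.Ioi x) ≤ nhdsWithin x (Set.Ici 0) :=
      nhdsWithin_mono x (fun z hz => le_trans hx (le_of_lt hz))
    have hc : ContinuousWithinAt (fun z => h z - fx - r * (z - x)) (Set.Ici 0) x :=
      (hd.continuousWithinAt.sub continuousWithinAt_const).sub
        ((continuous_const.mul (continuous_id.sub continuous_const)).continuousWithinAt)
    have h0 : h x - fx - r * (x - x) < 0 := by
      rw [sub_self, mul_zero]; linarith
    have := ((hc.mono_left hsub' : Filter.Tendsto _ _ _).eventually_lt_const h0 :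
      ∀ᶠ z in nhdsWithin x (Set.Ioi x), h z - fx - r * (z - x) < 0)
    filter_upwards [this] with z hz
    linarith

set_option maxHeartbeats 1000000 in
/-- The unit square [0,1]² is positively invariant for the fast–slow
Ross–Macdonald system i' = α_h(1-i)j - β_h i, j' = (α_v/ε)(1-j)i - (β_v/ε)j. -/
theorem stmt16 (αh βh αv βv ε : ℝ) (hαh : 0 < αh) (hβh : 0 < βh) (hαv : 0 < αv)
    (hβv : 0 < βv) (hε : 0 < ε)
    (i j : ℝ → ℝ)
    (hi : ∀ t ∈ Set.Ici (0 : ℝ),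
      HasDerivWithinAt i (αh * (1 - i t) * j t - βh * i t) (Set.Ici 0) t)
    (hj : ∀ t ∈ Set.Ici (0 : ℝ),
      HasDerivWithinAt j (αv / ε * (1 - j t) * i t - βv / ε * j t) (Set.Ici 0) t)
    (hi0 : i 0 ∈ Set.Icc (0 : ℝ) 1) (hj0 : j 0 ∈ Set.Icc (0 : ℝ) 1) :
    ∀ t ∈ Set.Ici (0 : ℝ), i t ∈ Set.Icc (0 : ℝ) 1 ∧ j t ∈ Set.Icc (0 : ℝ) 1 := by
  intro T hT
  -- the Lyapunov function
  set f : ℝ → ℝ := fun t => max (max (max (-i t) (i t - 1)) (max (-j t) (j t - 1))) 0 with hf_def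
  have hf0 : ∀ t, 0 ≤ f t := fun t => le_max_right _ _
  have h1 : ∀ t, -i t ≤ f t := fun t =>
    le_max_of_le_left (le_max_of_le_left (le_max_left _ _))
  have h2 : ∀ t, i t - 1 ≤ f t := fun t =>
    le_max_of_le_left (le_max_of_le_left (le_max_right _ _))
  have h3 : ∀ t, -j t ≤ f t := fun t =>
    le_max_of_le_left (le_max_of_le_right (le_max_left _ _))
  have h4 : ∀ t, j t - 1 ≤ f t := fun t =>
    le_max_of_le_left (le_max_of_le_right (le_max_right _ _))
  -- continuity
  have ci : ContinuousOn i (Set.Icc 0 T) := fun x hx =>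
    ((hi x hx.1).continuousWithinAt).mono Set.Icc_subset_Ici_self
  have cj : ContinuousOn j (Set.Icc 0 T) := fun x hx =>
    ((hj x hx.1).continuousWithinAt).mono Set.Icc_subset_Ici_self
  have cf : ContinuousOn f (Set.Icc 0 T) :=
    ((ci.neg.sup (ci.sub continuousOn_const)).sup
      (cj.neg.sup (cj.sub continuousOn_const))).sup continuousOn_const
  -- a bound on f on [0, T]
  obtain ⟨M0, hM0⟩ := IsCompact.exists_bound_of_continuousOn isCompact_Icc cf
  set M : ℝ := max M0 0 with hM_def
  have hM : ∀ x ∈ Set.Icc (0 : ℝ) T, f x ≤ M := fun x hx =>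
    le_trans (le_trans (le_abs_self _) (hM0 x hx)) (le_max_left _ _)
  have hMnn : (0 : ℝ) ≤ M := le_max_right _ _
  set K : ℝ := (αh + αv / ε) * (1 + M) + 1 with hK_def
  have hKnn : 0 ≤ K := by positivity
  -- the chosen "derivative" of f
  set A : ℝ → ℝ := fun t => -(αh * (1 - i t) * j t - βh * i t) with hA_def
  set B : ℝ → ℝ := fun t => αh * (1 - i t) * j t - βh * i t with hB_def
  set C : ℝ → ℝ := fun t => -(αv / ε * (1 - j t) * i t - βv / ε * j t) with hC_def
  set D : ℝ → ℝ := fun t => αv / ε * (1 - j t) * i t - βv / ε * j t with hD_def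
  set f' : ℝ → ℝ := fun t =>
    max (max (if -i t = f t then A t else 0) (if i t - 1 = f t then B t else 0))
        (max (if -j t = f t then C t else 0) (if j t - 1 = f t then D t else 0)) with hf'_def
  have hf'nn : ∀ t, 0 ≤ f' t := by
    intro t
    by_cases ha : -i t = f t
    · by_cases hb : i t - 1 = f t
      · exfalso; have := hf0 t; linarith [ha, hb]
      · refine le_max_of_le_left (le_max_of_le_right ?_)
        rw [if_neg hb]
    · refine le_max_of_le_left (le_max_of_le_left ?_)
      rw [if_neg ha]
  -- the Gronwall slope condition
  have slope_cond : ∀ x ∈ Set.Ico (0 : ℝ) T, ∀ r, f' x < r →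
      ∃ᶠ z in nhdsWithin x (Set.Ioi x), (z - x)⁻¹ * (f z - f x) < r := by
    intro x hx r hr
    have hx0 : (0 : ℝ) ≤ x := hx.1
    have hrpos : 0 < r := lt_of_le_of_lt (hf'nn x) hr
    have e1 : ∀ᶠ z in nhdsWithin x (Set.Ioi x), -i z - f x < r * (z - x) := by
      refine comp_aux16 (h := fun t => -i t) ((hi x hx0).neg) hx0 (h1 x) ?_
      intro hact
      calc -(αh * (1 - i x) * j x - βh * i x) = A x := rfl
        _ ≤ f' x := by
            refine le_max_of_le_left (le_max_of_le_left ?_)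
            rw [if_pos hact]
        _ < r := hr
    have e2 : ∀ᶠ z in nhdsWithin x (Set.Ioi x), (i z - 1) - f x < r * (z - x) := by
      refine comp_aux16 (h := fun t => i t - 1) ((hi x hx0).sub_const 1) hx0 (h2 x) ?_
      intro hact
      calc (αh * (1 - i x) * j x - βh * i x) = B x := rfl
        _ ≤ f' x := by
            refine le_max_of_le_left (le_max_of_le_right ?_)
            rw [if_pos hact]
        _ < r := hr
    have e3 : ∀ᶠ z in nhdsWithin x (Set.Ioi x), -j z - f x < r * (z - x) := by
      refine comp_aux16 (h := fun t => -j t) ((hj x hx0).neg) hx0 (h3 x) ?_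
      intro hact
      calc -(αv / ε * (1 - j x) * i x - βv / ε * j x) = C x := rfl
        _ ≤ f' x := by
            refine le_max_of_le_right (le_max_of_le_left ?_)
            rw [if_pos hact]
        _ < r := hr
    have e4 : ∀ᶠ z in nhdsWithin x (Set.Ioi x), (j z - 1) - f x < r * (z - x) := by
      refine comp_aux16 (h := fun t => j t - 1) ((hj x hx0).sub_const 1) hx0 (h4 x) ?_
      intro hact
      calc (αv / ε * (1 - j x) * i x - βv / ε * j x) = D x := rfl
        _ ≤ f' x := by
            refine le_max_of_le_right (le_max_of_le_right ?_)
            rw [if_pos hact]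
        _ < r := hr
    apply Filter.Eventually.frequently
    filter_upwards [e1, e2, e3, e4, self_mem_nhdsWithin] with z hz1 hz2 hz3 hz4 hz5
    have hzx : 0 < z - x := sub_pos.mpr hz5
    have h0z : (0 : ℝ) - f x < r * (z - x) := by
      have : 0 ≤ f x := hf0 x
      nlinarith
    have hfz : f z - f x < r * (z - x) := by
      have : f z < f x + r * (z - x) := by
        simp only [hf_def, max_lt_iff]
        refine ⟨⟨⟨?_, ?_⟩, ?_, ?_⟩, ?_⟩ <;> linarith
      linarith
    calc (z - x)⁻¹ * (f z - f x) < (z - x)⁻¹ * (r * (z - x)) := by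
          exact mul_lt_mul_of_pos_left hfz (inv_pos.mpr hzx)
      _ = r := by field_simp
  -- the Gronwall bound condition
  have bound_cond : ∀ x ∈ Set.Ico (0 : ℝ) T, f' x ≤ K * f x + 0 := by
    intro x hx
    rw [add_zero]
    have hF0 : 0 ≤ f x := hf0 x
    have hFM : f x ≤ M := hM x ⟨hx.1, hx.2.le⟩
    have hh1 := h1 x
    have hh2 := h2 x
    have hh3 := h3 x
    have hh4 := h4 x
    have hεpos : 0 < αv / ε := by positivity
    refine max_le (max_le ?_ ?_) (max_le ?_ ?_)
    · by_cases ha : -i x = f x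
      · rw [if_pos ha]
        simp only [hA_def, hK_def]
        rw [show i x = -(f x) by linarith]
        nlinarith [mul_nonneg (mul_nonneg hαh.le (by linarith : (0:ℝ) ≤ 1 + f x))
            (by linarith : 0 ≤ f x + j x),
          mul_nonneg hαh.le (mul_nonneg (by linarith : 0 ≤ M - f x) hF0),
          mul_nonneg hεpos.le (mul_nonneg (by linarith : (0:ℝ) ≤ 1 + M) hF0),
          mul_nonneg hβh.le hF0]
      · rw [if_neg ha]; positivity
    · by_cases hb : i x - 1 = f x
      · rw [if_pos hb]
        simp only [hB_def, hK_def]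
        rw [show i x = 1 + f x by linarith]
        nlinarith [mul_nonneg (mul_nonneg hαh.le hF0) (by linarith : 0 ≤ f x + j x),
          mul_nonneg hαh.le (mul_nonneg (by linarith : 0 ≤ M - f x) hF0),
          mul_nonneg hεpos.le (mul_nonneg (by linarith : (0:ℝ) ≤ 1 + M) hF0),
          mul_nonneg hαh.le hF0, mul_nonneg hβh.le hF0]
      · rw [if_neg hb]; positivity
    · by_cases hc : -j x = f x
      · rw [if_pos hc]
        simp only [hC_def, hK_def]
        rw [show j x = -(f x) by linarith]
        nlinarith [mul_nonneg (mul_nonneg hεpos.le (by linarith : (0:ℝ) ≤ 1 + f x))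
            (by linarith : 0 ≤ f x + i x),
          mul_nonneg hεpos.le (mul_nonneg (by linarith : 0 ≤ M - f x) hF0),
          mul_nonneg hαh.le (mul_nonneg (by linarith : (0:ℝ) ≤ 1 + M) hF0),
          mul_nonneg (div_nonneg hβv.le hε.le) hF0]
      · rw [if_neg hc]; positivity
    · by_cases hd : j x - 1 = f x
      · rw [if_pos hd]
        simp only [hD_def, hK_def]
        rw [show j x = 1 + f x by linarith]
        nlinarith [mul_nonneg (mul_nonneg hεpos.le hF0) (by linarith : 0 ≤ f x + i x),
          mul_nonneg hεpos.le (mul_nonneg (by linarith : 0 ≤ M - f x) hF0),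
          mul_nonneg hαh.le (mul_nonneg (by linarith : (0:ℝ) ≤ 1 + M) hF0),
          mul_nonneg hεpos.le hF0, mul_nonneg (div_nonneg hβv.le hε.le) hF0,
          div_nonneg hβv.le hε.le]
      · rw [if_neg hd]; positivity
  have hstart : f 0 ≤ 0 := by
    simp only [hf_def]
    refine max_le (max_le (max_le ?_ ?_) (max_le ?_ ?_)) le_rfl <;>
      [linarith [hi0.1]; linarith [hi0.2]; linarith [hj0.1]; linarith [hj0.2]]
  have := le_gronwallBound_of_liminf_deriv_right_le cf slope_cond hstart bound_cond
    T ⟨hT, le_rfl⟩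
  rw [gronwallBound_ε0_δ0] at this
  exact ⟨⟨by linarith [h1 T], by linarith [h2 T]⟩, ⟨by linarith [h3 T], by linarith [h4 T]⟩⟩
end
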